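/- arXiv:2504.07006 — 6 statements merged into one kernel-verified Lean document; each statement's English description precedes it below -/
import Mathlib

section
/- There exists a constant C > 0 such that the following holds (sifting). Let Ω₁, Ω₂ be finite nonempty sets, k, ℓ positive integers, α ∈ (0, 1], ε ∈ (0, 1], and let f : Ω₁ × Ω₂ → [0, 1] satisfy E_{x₁,…,x_k ∈ Ω₁, y₁,…,y_ℓ ∈ Ω₂}[∏_{i∈[k], j∈[ℓ]} f(x_i, y_j)] ≥ α^{kℓ} (i.e. ‖f‖_{G(k,ℓ)} ≥ α). Then there exist functions g₁ : Ω₁ → [0, 1] and g₂ : Ω₂ → [0, 1] such that E_{x∈Ω₁, y∈Ω₂}[f(x,y)·g₁(x)·g₂(y)] ≥ (1−ε)·α·E_{x∈Ω₁}[g₁(x)]·E_{y∈Ω₂}[g₂(y)] and E_{x∈Ω₁}[g₁(x)]·E_{y∈Ω₂}[g₂(y)] ≥ ε·α^{C(k+ℓ)}. -/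
open Finset

private lemma moment_cs {ι : Type*} [Fintype ι] (u : ι → ℝ) (hu : ∀ i, 0 ≤ u i) (m : ℕ) :
    (∑ i, u i ^ (m + 1)) ^ 2 ≤ (∑ i, u i ^ m) * (∑ i, u i ^ (m + 2)) :=
  Finset.sum_sq_le_sum_mul_sum_of_sq_eq_mul _
    (fun i _ => pow_nonneg (hu i) _) (fun i _ => pow_nonneg (hu i) _)
    (fun i _ => by rw [← pow_mul, ← pow_add]; congr 1; ring)

private lemma lyapunov {ι : Type*} [Fintype ι] (u : ι → ℝ) (hu : ∀ i, 0 ≤ u i) (m : ℕ) :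
    (∑ i, u i ^ m) ^ (m + 1) ≤ (Fintype.card ι : ℝ) * (∑ i, u i ^ (m + 1)) ^ m := by
  induction m with
  | zero => simp
  | succ m ih =>
    show (∑ i, u i ^ (m+1)) ^ (m + 2) ≤ (Fintype.card ι : ℝ) * (∑ i, u i ^ (m + 2)) ^ (m+1)
    have hcs := moment_cs u hu m
    set a := ∑ i, u i ^ m with ha
    set b := ∑ i, u i ^ (m+1) with hb
    set c := ∑ i, u i ^ (m+2) with hc
    have h0 : (0:ℝ) ≤ a := Finset.sum_nonneg fun i _ => pow_nonneg (hu i) _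
    have h1 : (0:ℝ) ≤ b := Finset.sum_nonneg fun i _ => pow_nonneg (hu i) _
    have h2 : (0:ℝ) ≤ c := Finset.sum_nonneg fun i _ => pow_nonneg (hu i) _
    rcases eq_or_lt_of_le h1 with h | h
    · rw [← h]
      have : (0:ℝ) ^ (m + 2) = 0 := zero_pow (by omega)
      rw [this]
      positivity
    · refine le_of_mul_le_mul_right ?_ (pow_pos h m)
      calc b ^ (m+2) * b ^ m
          = (b ^ 2) ^ (m + 1) := by ring
        _ ≤ (a * c) ^ (m + 1) := pow_le_pow_left₀ (sq_nonneg _) hcs _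
        _ = a ^ (m+1) * c ^ (m+1) := by rw [mul_pow]
        _ ≤ ((Fintype.card ι : ℝ) * b ^ m) * c ^ (m+1) :=
            mul_le_mul_of_nonneg_right ih (pow_nonneg h2 _)
        _ = (Fintype.card ι : ℝ) * c ^ (m + 1) * b ^ m := by ring

section gridlemmas
variable {Ω₁ Ω₂ : Type*} [Fintype Ω₁] [Fintype Ω₂]

private lemma gridY (f : Ω₁ → Ω₂ → ℝ) (k l : ℕ) :
    ∑ x : Fin k → Ω₁, ∑ y : Fin l → Ω₂, ∏ i : Fin k, ∏ j : Fin l, f (x i) (y j)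
      = ∑ Y : Fin l → Ω₂, (∑ x : Ω₁, ∏ j : Fin l, f x (Y j)) ^ k := by
  rw [Finset.sum_comm]
  exact Finset.sum_congr rfl fun Y _ =>
    (Fintype.sum_pow (fun x => ∏ j : Fin l, f x (Y j)) k).symm

private lemma gridX (f : Ω₁ → Ω₂ → ℝ) (k l : ℕ) :
    ∑ x : Fin k → Ω₁, ∑ y : Fin l → Ω₂, ∏ i : Fin k, ∏ j : Fin l, f (x i) (y j)
      = ∑ X : Fin k → Ω₁, (∑ y : Ω₂, ∏ i : Fin k, f (X i) y) ^ l := by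
  refine Finset.sum_congr rfl fun X _ => ?_
  rw [Fintype.sum_pow (fun y => ∏ i : Fin k, f (X i) y) l]
  exact Finset.sum_congr rfl fun Y _ => Finset.prod_comm

private lemma gridX' (f : Ω₁ → Ω₂ → ℝ) (k l : ℕ) :
    ∑ X : Fin k → Ω₁, (∑ y : Ω₂, ∏ i : Fin k, f (X i) y) ^ (l + 1)
      = ∑ Y : Fin l → Ω₂, ∑ y : Ω₂, (∑ x : Ω₁, f x y * ∏ j : Fin l, f x (Y j)) ^ k := by
  have step : ∀ X : Fin k → Ω₁,
      (∑ y : Ω₂, ∏ i : Fin k, f (X i) y) ^ (l + 1)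
        = ∑ Y : Fin l → Ω₂, ∑ y : Ω₂,
            (∏ j : Fin l, ∏ i : Fin k, f (X i) (Y j)) * ∏ i : Fin k, f (X i) y := by
    intro X
    rw [pow_succ, Fintype.sum_pow (fun y => ∏ i : Fin k, f (X i) y) l, Finset.sum_mul]
    exact Finset.sum_congr rfl fun Y _ => Finset.mul_sum _ _ _
  calc ∑ X : Fin k → Ω₁, (∑ y : Ω₂, ∏ i : Fin k, f (X i) y) ^ (l + 1)
      = ∑ X : Fin k → Ω₁, ∑ Y : Fin l → Ω₂, ∑ y : Ω₂,
          (∏ j : Fin l, ∏ i : Fin k, f (X i) (Y j)) * ∏ i : Fin k, f (X i) y :=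
        Finset.sum_congr rfl fun X _ => step X
    _ = ∑ Y : Fin l → Ω₂, ∑ y : Ω₂, ∑ X : Fin k → Ω₁,
          (∏ j : Fin l, ∏ i : Fin k, f (X i) (Y j)) * ∏ i : Fin k, f (X i) y := by
        rw [Finset.sum_comm]
        exact Finset.sum_congr rfl fun Y _ => Finset.sum_comm
    _ = ∑ Y : Fin l → Ω₂, ∑ y : Ω₂, (∑ x : Ω₁, f x y * ∏ j : Fin l, f x (Y j)) ^ k := by
        refine Finset.sum_congr rfl fun Y _ => Finset.sum_congr rfl fun y _ => ?_
        rw [Fintype.sum_pow (fun x => f x y * ∏ j : Fin l, f x (Y j)) k]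
        refine Finset.sum_congr rfl fun X _ => ?_
        rw [Finset.prod_comm, ← Finset.prod_mul_distrib]
        exact Finset.prod_congr rfl fun i _ => by rw [mul_comm]

end gridlemmas

private lemma sifting_key {Ω₁ Ω₂ : Type*} [Fintype Ω₁] [Fintype Ω₂]
    [Nonempty Ω₁] [Nonempty Ω₂] (k' l' : ℕ) (α ε : ℝ)
    (hα0 : 0 < α) (hα1 : α ≤ 1) (hε0 : 0 < ε) (hε1 : ε ≤ 1)
    (f : Ω₁ → Ω₂ → ℝ) (hf : ∀ x y, f x y ∈ Set.Icc (0 : ℝ) 1)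
    (hgrid : α ^ ((k' + 1) * (l' + 1)) ≤
      (∑ x : Fin (k' + 1) → Ω₁, ∑ y : Fin (l' + 1) → Ω₂,
          ∏ i : Fin (k' + 1), ∏ j : Fin (l' + 1), f (x i) (y j)) /
        ((Fintype.card Ω₁ : ℝ) ^ (k' + 1) * (Fintype.card Ω₂ : ℝ) ^ (l' + 1))) :
    ∃ Y₀ : Fin (l' + 1) → Ω₂,
      ε * α ^ (k' + 1 + (l' + 1)) * ((Fintype.card Ω₁ : ℝ) * (Fintype.card Ω₂ : ℝ))
        ≤ (∑ x : Ω₁, ∏ j : Fin (l' + 1), f x (Y₀ j)) *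
          ((Finset.univ.filter (fun y : Ω₂ =>
              (1 - ε) * α * (∑ x : Ω₁, ∏ j : Fin (l' + 1), f x (Y₀ j))
                ≤ ∑ x : Ω₁, f x y * ∏ j : Fin (l' + 1), f x (Y₀ j))).card : ℝ) := by
  classical
  have hf0 : ∀ x y, 0 ≤ f x y := fun x y => (hf x y).1
  have hf1 : ∀ x y, f x y ≤ 1 := fun x y => (hf x y).2
  set n₁ : ℝ := (Fintype.card Ω₁ : ℝ) with hn₁
  set n₂ : ℝ := (Fintype.card Ω₂ : ℝ) with hn₂
  have hn₁pos : (0:ℝ) < n₁ := by rw [hn₁]; exact_mod_cast Fintype.card_pos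
  have hn₂pos : (0:ℝ) < n₂ := by rw [hn₂]; exact_mod_cast Fintype.card_pos
  set SD : (Fin (l' + 1) → Ω₂) → ℝ := fun Y => ∑ x : Ω₁, ∏ j : Fin (l' + 1), f x (Y j)
    with hSDdef
  set Sc : (Fin (l' + 1) → Ω₂) → Ω₂ → ℝ :=
    fun Y y => ∑ x : Ω₁, f x y * ∏ j : Fin (l' + 1), f x (Y j) with hScdef
  have hSD0 : ∀ Y, 0 ≤ SD Y := fun Y => Finset.sum_nonneg fun x _ =>
    Finset.prod_nonneg fun j _ => hf0 _ _
  have hSc0 : ∀ Y y, 0 ≤ Sc Y y := fun Y y => Finset.sum_nonneg fun x _ =>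
    mul_nonneg (hf0 _ _) (Finset.prod_nonneg fun j _ => hf0 _ _)
  have hScSD : ∀ Y y, Sc Y y ≤ SD Y := fun Y y => Finset.sum_le_sum fun x _ =>
    mul_le_of_le_one_left (Finset.prod_nonneg fun j _ => hf0 _ _) (hf1 _ _)
  set B : (Fin (l' + 1) → Ω₂) → Finset Ω₂ :=
    fun Y => Finset.univ.filter (fun y : Ω₂ => (1 - ε) * α * SD Y ≤ Sc Y y) with hBdef
  set G := ∑ Y : Fin (l' + 1) → Ω₂, SD Y ^ (k' + 1) with hGdef
  -- grid hypothesis, unnormalized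
  have hgrid' : α ^ ((k' + 1) * (l' + 1)) * (n₁ ^ (k' + 1) * n₂ ^ (l' + 1)) ≤ G := by
    rw [hGdef]
    simp only [hSDdef]
    rw [← gridY]
    exact (le_div_iff₀ (by positivity)).mp hgrid
  have hGpos : 0 < G := lt_of_lt_of_le (mul_pos (pow_pos hα0 _)
    (mul_pos (pow_pos hn₁pos _) (pow_pos hn₂pos _))) hgrid'
  set SH : (Fin (k' + 1) → Ω₁) → ℝ := fun X => ∑ y : Ω₂, ∏ i : Fin (k' + 1), f (X i) y
    with hSHdef
  have hSH0 : ∀ X, 0 ≤ SH X := fun X => Finset.sum_nonneg fun y _ =>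
    Finset.prod_nonneg fun i _ => hf0 _ _
  have hGX : G = ∑ X : Fin (k' + 1) → Ω₁, SH X ^ (l' + 1) := by
    rw [hGdef]; simp only [hSDdef, hSHdef]
    exact ((gridX f _ _).symm.trans (gridY f _ _)).symm
  set G' := ∑ Y : Fin (l' + 1) → Ω₂, ∑ y : Ω₂, Sc Y y ^ (k' + 1) with hG'def
  have hG'0 : 0 ≤ G' := by
    rw [hG'def]
    exact Finset.sum_nonneg fun Y _ => Finset.sum_nonneg fun y _ =>
      pow_nonneg (hSc0 Y y) _
  have hA'eq : ∑ X : Fin (k' + 1) → Ω₁, SH X ^ (l' + 1 + 1) = G' := by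
    rw [hG'def]; simp only [hSHdef, hScdef]
    exact gridX' f (k' + 1) (l' + 1)
  have hcard1 : ((Fintype.card (Fin (k' + 1) → Ω₁) : ℕ) : ℝ) = n₁ ^ (k' + 1) := by
    rw [hn₁]; rw [Fintype.card_fun]; push_cast; simp
  have hcard2 : ((Fintype.card (Fin (l' + 1) → Ω₂) : ℕ) : ℝ) = n₂ ^ (l' + 1) := by
    rw [hn₂]; rw [Fintype.card_fun]; push_cast; simp
  have hlyapX : G ^ (l' + 1 + 1) ≤ n₁ ^ (k' + 1) * G' ^ (l' + 1) := by
    have h := lyapunov SH hSH0 (l' + 1)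
    rw [hcard1, hA'eq, ← hGX] at h
    exact h
  have hGG' : G * (α ^ (k' + 1) * n₂) ≤ G' := by
    refine le_of_pow_le_pow_left₀ (Nat.succ_ne_zero l') hG'0 ?_
    refine le_of_mul_le_mul_right ?_ (pow_pos hn₁pos (k' + 1))
    calc (G * (α ^ (k' + 1) * n₂)) ^ (l' + 1) * n₁ ^ (k' + 1)
        = G ^ (l' + 1) * (α ^ ((k' + 1) * (l' + 1)) * (n₁ ^ (k' + 1) * n₂ ^ (l' + 1))) := by
          ring
      _ ≤ G ^ (l' + 1) * G := mul_le_mul_of_nonneg_left hgrid' (pow_nonneg hGpos.le _)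
      _ = G ^ (l' + 1 + 1) := by ring
      _ ≤ n₁ ^ (k' + 1) * G' ^ (l' + 1) := hlyapX
      _ = G' ^ (l' + 1) * n₁ ^ (k' + 1) := by ring
  -- split the (k, l+1) grid sum according to good/bad columns
  have hsplit : G' ≤ (∑ Y : Fin (l' + 1) → Ω₂, ((B Y).card : ℝ) * SD Y ^ (k' + 1))
      + (1 - ε) * α ^ (k' + 1) * n₂ * G := by
    have perY : ∀ Y : Fin (l' + 1) → Ω₂, ∑ y : Ω₂, Sc Y y ^ (k' + 1)
        ≤ ((B Y).card : ℝ) * SD Y ^ (k' + 1)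
          + (1 - ε) * α ^ (k' + 1) * n₂ * SD Y ^ (k' + 1) := by
      intro Y
      rw [← Finset.sum_filter_add_sum_filter_not Finset.univ
        (fun y : Ω₂ => (1 - ε) * α * SD Y ≤ Sc Y y) (fun y => Sc Y y ^ (k' + 1))]
      have part1 : ∑ y ∈ B Y, Sc Y y ^ (k' + 1) ≤ ((B Y).card : ℝ) * SD Y ^ (k' + 1) := by
        have := Finset.sum_le_card_nsmul (B Y) (fun y => Sc Y y ^ (k' + 1))
          (SD Y ^ (k' + 1)) (fun y _ => pow_le_pow_left₀ (hSc0 Y y) (hScSD Y y) _)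
        rwa [nsmul_eq_mul] at this
      have part2 : ∑ y ∈ Finset.univ.filter
          (fun y : Ω₂ => ¬ ((1 - ε) * α * SD Y ≤ Sc Y y)), Sc Y y ^ (k' + 1)
          ≤ (1 - ε) * α ^ (k' + 1) * n₂ * SD Y ^ (k' + 1) := by
        have hterm : ∀ y ∈ Finset.univ.filter
            (fun y : Ω₂ => ¬ ((1 - ε) * α * SD Y ≤ Sc Y y)),
            Sc Y y ^ (k' + 1) ≤ (1 - ε) * α ^ (k' + 1) * SD Y ^ (k' + 1) := by
          intro y hy
          have hy' : Sc Y y < (1 - ε) * α * SD Y :=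
            not_le.mp (Finset.mem_filter.mp hy).2
          have h1ε : (0:ℝ) ≤ 1 - ε := by linarith
          calc Sc Y y ^ (k' + 1) ≤ ((1 - ε) * α * SD Y) ^ (k' + 1) :=
                pow_le_pow_left₀ (hSc0 Y y) hy'.le _
            _ = (1 - ε) ^ (k' + 1) * (α ^ (k' + 1) * SD Y ^ (k' + 1)) := by
                rw [mul_pow, mul_pow, mul_assoc]
            _ ≤ (1 - ε) * (α ^ (k' + 1) * SD Y ^ (k' + 1)) := by
                refine mul_le_mul_of_nonneg_right ?_
                  (mul_nonneg (pow_nonneg hα0.le _) (pow_nonneg (hSD0 Y) _))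
                calc (1 - ε) ^ (k' + 1) ≤ (1 - ε) ^ 1 :=
                      pow_le_pow_of_le_one h1ε (by linarith) (by omega)
                  _ = 1 - ε := pow_one _
            _ = (1 - ε) * α ^ (k' + 1) * SD Y ^ (k' + 1) := by ring
        have hsum := Finset.sum_le_card_nsmul _ _ _ hterm
        rw [nsmul_eq_mul] at hsum
        refine hsum.trans ?_
        have hcardle : ((Finset.univ.filter
            (fun y : Ω₂ => ¬ ((1 - ε) * α * SD Y ≤ Sc Y y))).card : ℝ) ≤ n₂ := by
          rw [hn₂]
          exact_mod_cast Finset.card_filter_le _ _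
        calc ((Finset.univ.filter
              (fun y : Ω₂ => ¬ ((1 - ε) * α * SD Y ≤ Sc Y y))).card : ℝ) *
              ((1 - ε) * α ^ (k' + 1) * SD Y ^ (k' + 1))
            ≤ n₂ * ((1 - ε) * α ^ (k' + 1) * SD Y ^ (k' + 1)) := by
              refine mul_le_mul_of_nonneg_right hcardle ?_
              have h1ε : (0:ℝ) ≤ 1 - ε := by linarith
              exact mul_nonneg (mul_nonneg h1ε (pow_nonneg hα0.le _))
                (pow_nonneg (hSD0 Y) _)
          _ = (1 - ε) * α ^ (k' + 1) * n₂ * SD Y ^ (k' + 1) := by ring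
      exact add_le_add part1 part2
    rw [hG'def]
    calc ∑ Y : Fin (l' + 1) → Ω₂, ∑ y : Ω₂, Sc Y y ^ (k' + 1)
        ≤ ∑ Y : Fin (l' + 1) → Ω₂, (((B Y).card : ℝ) * SD Y ^ (k' + 1)
            + (1 - ε) * α ^ (k' + 1) * n₂ * SD Y ^ (k' + 1)) :=
          Finset.sum_le_sum fun Y _ => perY Y
      _ = (∑ Y : Fin (l' + 1) → Ω₂, ((B Y).card : ℝ) * SD Y ^ (k' + 1))
            + (1 - ε) * α ^ (k' + 1) * n₂ * G := by
          rw [Finset.sum_add_distrib, hGdef, Finset.mul_sum]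
  have hS : ε * (α ^ (k' + 1) * n₂ * G)
      ≤ ∑ Y : Fin (l' + 1) → Ω₂, ((B Y).card : ℝ) * SD Y ^ (k' + 1) := by
    have e : ε * (α ^ (k' + 1) * n₂ * G)
        = G * (α ^ (k' + 1) * n₂) - (1 - ε) * α ^ (k' + 1) * n₂ * G := by ring
    rw [e]
    linarith [hGG', hsplit]
  -- choose the maximizing tuple
  obtain ⟨Y₀, -, hY₀⟩ := Finset.exists_max_image (Finset.univ : Finset (Fin (l' + 1) → Ω₂))
    (fun Y => SD Y * ((B Y).card : ℝ)) Finset.univ_nonempty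
  set T := ∑ Y : Fin (l' + 1) → Ω₂, SD Y ^ k' with hTdef
  have hT0 : 0 ≤ T := by
    rw [hTdef]; exact Finset.sum_nonneg fun Y _ => pow_nonneg (hSD0 Y) _
  have hmax : ∑ Y : Fin (l' + 1) → Ω₂, ((B Y).card : ℝ) * SD Y ^ (k' + 1)
      ≤ (SD Y₀ * ((B Y₀).card : ℝ)) * T := by
    rw [hTdef, Finset.mul_sum]
    refine Finset.sum_le_sum fun Y _ => ?_
    calc ((B Y).card : ℝ) * SD Y ^ (k' + 1)
        = (SD Y * ((B Y).card : ℝ)) * SD Y ^ k' := by ring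
      _ ≤ (SD Y₀ * ((B Y₀).card : ℝ)) * SD Y ^ k' :=
          mul_le_mul_of_nonneg_right (hY₀ Y (Finset.mem_univ Y))
            (pow_nonneg (hSD0 Y) _)
  have hlyapY : T ^ (k' + 1) ≤ n₂ ^ (l' + 1) * G ^ k' := by
    have h := lyapunov SD hSD0 k'
    rw [hcard2, ← hTdef, ← hGdef] at h
    exact h
  have hφ0 : 0 ≤ SD Y₀ * ((B Y₀).card : ℝ) := mul_nonneg (hSD0 _) (Nat.cast_nonneg _)
  refine ⟨Y₀, ?_⟩
  show ε * α ^ (k' + 1 + (l' + 1)) * (n₁ * n₂) ≤ SD Y₀ * ((B Y₀).card : ℝ)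
  have c1 : (ε * (α ^ (k' + 1) * n₂ * G)) ^ (k' + 1)
      ≤ ((SD Y₀ * ((B Y₀).card : ℝ)) * T) ^ (k' + 1) :=
    pow_le_pow_left₀ (mul_nonneg hε0.le (mul_nonneg (mul_nonneg (pow_nonneg hα0.le _)
      hn₂pos.le) hGpos.le)) (hS.trans hmax) _
  have c3 : (SD Y₀ * ((B Y₀).card : ℝ)) ^ (k' + 1) * T ^ (k' + 1)
      ≤ (SD Y₀ * ((B Y₀).card : ℝ)) ^ (k' + 1) * (n₂ ^ (l' + 1) * G ^ k') :=
    mul_le_mul_of_nonneg_left hlyapY (pow_nonneg hφ0 _)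
  have c4 : (ε * α ^ (k' + 1 + (l' + 1)) * (n₁ * n₂)) ^ (k' + 1) * (G ^ k' * n₂ ^ (l' + 1))
      ≤ (ε * (α ^ (k' + 1) * n₂ * G)) ^ (k' + 1) := by
    have hcnn : (0:ℝ) ≤ ε ^ (k' + 1) * α ^ ((k' + 1) * (k' + 1)) * n₂ ^ (k' + 1) * G ^ k' :=
      mul_nonneg (mul_nonneg (mul_nonneg (pow_nonneg hε0.le _) (pow_nonneg hα0.le _))
        (pow_nonneg hn₂pos.le _)) (pow_nonneg hGpos.le _)
    have base := mul_le_mul_of_nonneg_left hgrid' hcnn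
    calc (ε * α ^ (k' + 1 + (l' + 1)) * (n₁ * n₂)) ^ (k' + 1) * (G ^ k' * n₂ ^ (l' + 1))
        = (ε ^ (k' + 1) * α ^ ((k' + 1) * (k' + 1)) * n₂ ^ (k' + 1) * G ^ k') *
            (α ^ ((k' + 1) * (l' + 1)) * (n₁ ^ (k' + 1) * n₂ ^ (l' + 1))) := by ring
      _ ≤ (ε ^ (k' + 1) * α ^ ((k' + 1) * (k' + 1)) * n₂ ^ (k' + 1) * G ^ k') * G := base
      _ = (ε * (α ^ (k' + 1) * n₂ * G)) ^ (k' + 1) := by ring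
  have main : (ε * α ^ (k' + 1 + (l' + 1)) * (n₁ * n₂)) ^ (k' + 1) * (G ^ k' * n₂ ^ (l' + 1))
      ≤ (SD Y₀ * ((B Y₀).card : ℝ)) ^ (k' + 1) * (G ^ k' * n₂ ^ (l' + 1)) := by
    calc (ε * α ^ (k' + 1 + (l' + 1)) * (n₁ * n₂)) ^ (k' + 1) * (G ^ k' * n₂ ^ (l' + 1))
      ≤ (ε * (α ^ (k' + 1) * n₂ * G)) ^ (k' + 1) := c4
      _ ≤ ((SD Y₀ * ((B Y₀).card : ℝ)) * T) ^ (k' + 1) := c1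
      _ = (SD Y₀ * ((B Y₀).card : ℝ)) ^ (k' + 1) * T ^ (k' + 1) := by rw [mul_pow]
      _ ≤ (SD Y₀ * ((B Y₀).card : ℝ)) ^ (k' + 1) * (n₂ ^ (l' + 1) * G ^ k') := c3
      _ = (SD Y₀ * ((B Y₀).card : ℝ)) ^ (k' + 1) * (G ^ k' * n₂ ^ (l' + 1)) := by ring
  have main2 := le_of_mul_le_mul_right main (mul_pos (pow_pos hGpos _) (pow_pos hn₂pos _))
  exact le_of_pow_le_pow_left₀ (Nat.succ_ne_zero k') hφ0 main2

private lemma sifting_end {Ω₁ Ω₂ : Type*} [Fintype Ω₁] [Fintype Ω₂]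
    [Nonempty Ω₁] [Nonempty Ω₂] (k' l' : ℕ) (α ε : ℝ)
    (hα0 : 0 < α) (hε0 : 0 < ε) (hε1 : ε ≤ 1)
    (f : Ω₁ → Ω₂ → ℝ) (hf : ∀ x y, f x y ∈ Set.Icc (0 : ℝ) 1)
    (Y₀ : Fin (l' + 1) → Ω₂)
    (hKey : ε * α ^ (k' + 1 + (l' + 1)) * ((Fintype.card Ω₁ : ℝ) * (Fintype.card Ω₂ : ℝ))
        ≤ (∑ x : Ω₁, ∏ j : Fin (l' + 1), f x (Y₀ j)) *
          ((Finset.univ.filter (fun y : Ω₂ =>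
              (1 - ε) * α * (∑ x : Ω₁, ∏ j : Fin (l' + 1), f x (Y₀ j))
                ≤ ∑ x : Ω₁, f x y * ∏ j : Fin (l' + 1), f x (Y₀ j))).card : ℝ)) :
    ∃ (g₁ : Ω₁ → ℝ) (g₂ : Ω₂ → ℝ),
      (∀ x, g₁ x ∈ Set.Icc (0 : ℝ) 1) ∧ (∀ y, g₂ y ∈ Set.Icc (0 : ℝ) 1) ∧
      (1 - ε) * α * ((∑ x : Ω₁, g₁ x) / (Fintype.card Ω₁ : ℝ)) *
          ((∑ y : Ω₂, g₂ y) / (Fintype.card Ω₂ : ℝ)) ≤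
        (∑ x : Ω₁, ∑ y : Ω₂, f x y * g₁ x * g₂ y) /
          ((Fintype.card Ω₁ : ℝ) * (Fintype.card Ω₂ : ℝ)) ∧
      ε * α ^ (k' + 1 + (l' + 1)) ≤
        ((∑ x : Ω₁, g₁ x) / (Fintype.card Ω₁ : ℝ)) *
          ((∑ y : Ω₂, g₂ y) / (Fintype.card Ω₂ : ℝ)) := by
  classical
  have hn₁pos : (0:ℝ) < (Fintype.card Ω₁ : ℝ) := by exact_mod_cast Fintype.card_pos
  have hn₂pos : (0:ℝ) < (Fintype.card Ω₂ : ℝ) := by exact_mod_cast Fintype.card_pos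
  set P : Ω₂ → Prop := fun y =>
    (1 - ε) * α * (∑ x : Ω₁, ∏ j : Fin (l' + 1), f x (Y₀ j))
      ≤ ∑ x : Ω₁, f x y * ∏ j : Fin (l' + 1), f x (Y₀ j) with hPdef
  refine ⟨fun x => ∏ j : Fin (l' + 1), f x (Y₀ j),
    fun y => if P y then (1:ℝ) else 0, ?_, ?_, ?_, ?_⟩
  · intro x
    exact ⟨Finset.prod_nonneg fun j _ => (hf x _).1,
      Finset.prod_le_one (fun j _ => (hf x _).1) (fun j _ => (hf x _).2)⟩
  · intro y
    dsimp only
    split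
    · exact ⟨zero_le_one, le_refl 1⟩
    · exact ⟨le_refl 0, zero_le_one⟩
  · -- density on the rectangle
    have hsum2 : ∑ y : Ω₂, (if P y then (1:ℝ) else 0)
        = ((Finset.univ.filter P).card : ℝ) := by
      rw [Finset.sum_boole]
    have hnum : ∑ x : Ω₁, ∑ y : Ω₂,
        f x y * (∏ j : Fin (l' + 1), f x (Y₀ j)) * (if P y then (1:ℝ) else 0)
        = ∑ y ∈ Finset.univ.filter P, ∑ x : Ω₁,
            f x y * ∏ j : Fin (l' + 1), f x (Y₀ j) := by
      rw [Finset.sum_comm, Finset.sum_filter]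
      refine Finset.sum_congr rfl fun y _ => ?_
      split
      · simp
      · simp
    have hlow2 : ((Finset.univ.filter P).card : ℝ) *
        ((1 - ε) * α * (∑ x : Ω₁, ∏ j : Fin (l' + 1), f x (Y₀ j)))
        ≤ ∑ y ∈ Finset.univ.filter P, ∑ x : Ω₁,
            f x y * ∏ j : Fin (l' + 1), f x (Y₀ j) := by
      have := Finset.card_nsmul_le_sum (Finset.univ.filter P)
        (fun y => ∑ x : Ω₁, f x y * ∏ j : Fin (l' + 1), f x (Y₀ j))
        ((1 - ε) * α * (∑ x : Ω₁, ∏ j : Fin (l' + 1), f x (Y₀ j)))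
        (fun y hy => (Finset.mem_filter.mp hy).2)
      rwa [nsmul_eq_mul] at this
    show (1 - ε) * α * ((∑ x : Ω₁, ∏ j : Fin (l' + 1), f x (Y₀ j)) / (Fintype.card Ω₁ : ℝ)) *
        ((∑ y : Ω₂, (if P y then (1:ℝ) else 0)) / (Fintype.card Ω₂ : ℝ)) ≤
      (∑ x : Ω₁, ∑ y : Ω₂,
          f x y * (∏ j : Fin (l' + 1), f x (Y₀ j)) * (if P y then (1:ℝ) else 0)) /
        ((Fintype.card Ω₁ : ℝ) * (Fintype.card Ω₂ : ℝ))
    rw [hsum2, hnum]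
    have heq : (1 - ε) * α *
        ((∑ x : Ω₁, ∏ j : Fin (l' + 1), f x (Y₀ j)) / (Fintype.card Ω₁ : ℝ)) *
        (((Finset.univ.filter P).card : ℝ) / (Fintype.card Ω₂ : ℝ))
        = (((Finset.univ.filter P).card : ℝ) *
            ((1 - ε) * α * (∑ x : Ω₁, ∏ j : Fin (l' + 1), f x (Y₀ j)))) /
          ((Fintype.card Ω₁ : ℝ) * (Fintype.card Ω₂ : ℝ)) := by
      ring
    rw [heq]
    exact (div_le_div_iff_of_pos_right (mul_pos hn₁pos hn₂pos)).mpr hlow2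
  · -- size of the rectangle
    have hsum2 : ∑ y : Ω₂, (if P y then (1:ℝ) else 0)
        = ((Finset.univ.filter P).card : ℝ) := by
      rw [Finset.sum_boole]
    show ε * α ^ (k' + 1 + (l' + 1)) ≤
      ((∑ x : Ω₁, ∏ j : Fin (l' + 1), f x (Y₀ j)) / (Fintype.card Ω₁ : ℝ)) *
        ((∑ y : Ω₂, (if P y then (1:ℝ) else 0)) / (Fintype.card Ω₂ : ℝ))
    rw [hsum2, div_mul_div_comm, le_div_iff₀ (mul_pos hn₁pos hn₂pos)]
    exact hKey



/-- Sifting (Theorem 3.4 of the paper): if the `(k, ℓ)`-grid norm of a `[0,1]`-valued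
function `f` is at least `α`, then `f` has average value close to `α` on a not-too-small
rectangle. -/
theorem sifting :
    ∃ C : ℝ, 0 < C ∧
      ∀ (Ω₁ Ω₂ : Type*) [Fintype Ω₁] [Fintype Ω₂] [Nonempty Ω₁] [Nonempty Ω₂]
        (k l : ℕ), 0 < k → 0 < l →
        ∀ α ε : ℝ, α ∈ Set.Ioc (0 : ℝ) 1 → ε ∈ Set.Ioc (0 : ℝ) 1 →
        ∀ f : Ω₁ → Ω₂ → ℝ, (∀ x y, f x y ∈ Set.Icc (0 : ℝ) 1) →
        α ^ (k * l) ≤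
          (∑ x : Fin k → Ω₁, ∑ y : Fin l → Ω₂, ∏ i : Fin k, ∏ j : Fin l, f (x i) (y j)) /
            ((Fintype.card Ω₁ : ℝ) ^ k * (Fintype.card Ω₂ : ℝ) ^ l) →
        ∃ (g₁ : Ω₁ → ℝ) (g₂ : Ω₂ → ℝ),
          (∀ x, g₁ x ∈ Set.Icc (0 : ℝ) 1) ∧ (∀ y, g₂ y ∈ Set.Icc (0 : ℝ) 1) ∧
          (1 - ε) * α * ((∑ x : Ω₁, g₁ x) / (Fintype.card Ω₁ : ℝ)) *
              ((∑ y : Ω₂, g₂ y) / (Fintype.card Ω₂ : ℝ)) ≤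
            (∑ x : Ω₁, ∑ y : Ω₂, f x y * g₁ x * g₂ y) /
              ((Fintype.card Ω₁ : ℝ) * (Fintype.card Ω₂ : ℝ)) ∧
          ε * α ^ (C * ((k : ℝ) + (l : ℝ))) ≤
            ((∑ x : Ω₁, g₁ x) / (Fintype.card Ω₁ : ℝ)) *
              ((∑ y : Ω₂, g₂ y) / (Fintype.card Ω₂ : ℝ)) := by
  refine ⟨1, one_pos, ?_⟩
  intro Ω₁ Ω₂ _ _ _ _ k l hk hl α ε hα hε f hf hgrid
  obtain ⟨k', rfl⟩ : ∃ m, k = m + 1 := ⟨k - 1, (Nat.succ_pred_eq_of_pos hk).symm⟩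
  obtain ⟨l', rfl⟩ : ∃ m, l = m + 1 := ⟨l - 1, (Nat.succ_pred_eq_of_pos hl).symm⟩
  obtain ⟨Y₀, hKey⟩ := sifting_key k' l' α ε hα.1 hα.2 hε.1 hε.2 f hf hgrid
  have hconv : (1:ℝ) * (((k' + 1 : ℕ) : ℝ) + ((l' + 1 : ℕ) : ℝ))
      = ((k' + 1 + (l' + 1) : ℕ) : ℝ) := by push_cast; ring
  rw [hconv, Real.rpow_natCast]
  exact sifting_end k' l' α ε hα.1 hε.1 hε.2 f hf Y₀ hKey
end

section
/- Counting lemma: Let Ω₁, Ω₂ be finite nonempty sets and let T ⊆ Ω₁ × Ω₂ be (τ, γ)-combinatorially spread for some τ, γ > 0. Let k, ℓ be positive integers, let E ⊆ [k] × [ℓ] be a set of edges of a bipartite graph on vertex sets [k] and [ℓ], and let (i*, j*) ∈ E. For each (i, j) ∈ E \ {(i*, j*)} let f_{ij} : Ω₁ × Ω₂ → [0, 1]. Then E_{x₁,…,x_k ∈ Ω₁, y₁,…,y_ℓ ∈ Ω₂}[1_T(x_{i*}, y_{j*}) · ∏_{(i,j) ∈ E \ {(i*,j*)}} f_{ij}(x_i,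 y_j)] ≤ τ · E_{x₁,…,x_k ∈ Ω₁, y₁,…,y_ℓ ∈ Ω₂}[∏_{(i,j) ∈ E \ {(i*,j*)}} f_{ij}(x_i, y_j)] + γ. -/
/-!
Fix every vertex variable except `x_{i*}` and `y_{j*}`. No edge other than `(i*, j*)` meets both
of these vertices, so the remaining product is `F(x_{i*}) · G(y_{j*})` with `F, G` valued in
`[0, 1]`, and the spread property bounds its average against `1_T(x_{i*}, y_{j*})`. Averaging
over the fixed variables gives the claim. Fixing all but one coordinate is expressed by
resampling that coordinate of a uniform `x : Fin k → Ω₁` with `Function.update`, which keeps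
`x` uniform.
-/

/-- A subset `T ⊆ Ω₁ × Ω₂` is `(τ, γ)`-combinatorially spread if its density on every
rectangle is at most `τ` times the density of the rectangle, up to error `γ`
(Definition 3.1 of the paper). -/
def CombinatoriallySpread {Ω₁ Ω₂ : Type*} [Fintype Ω₁] [Fintype Ω₂]
    (T : Set (Ω₁ × Ω₂)) (τ γ : ℝ) : Prop :=
  ∀ (f : Ω₁ → ℝ) (g : Ω₂ → ℝ),
    (∀ x, f x ∈ Set.Icc (0 : ℝ) 1) → (∀ y, g y ∈ Set.Icc (0 : ℝ) 1) →
    (∑ x : Ω₁, ∑ y : Ω₂, f x * g y * T.indicator (fun _ => (1 : ℝ)) (x, y)) /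
        ((Fintype.card Ω₁ : ℝ) * (Fintype.card Ω₂ : ℝ)) ≤
      τ * ((∑ x : Ω₁, f x) / (Fintype.card Ω₁ : ℝ)) *
          ((∑ y : Ω₂, g y) / (Fintype.card Ω₂ : ℝ)) + γ

open Finset Function
open scoped BigOperators

section Resampling

variable {ι κ α β M : Type*} [Fintype ι] [DecidableEq ι] [Fintype κ] [DecidableEq κ]
  [Fintype α] [Fintype β] [AddCommMonoid M] [Module ℚ≥0 M]

theorem Fintype.expect_expect_update [Nonempty α] (φ : (ι → α) → M) (i : ι) :
    𝔼 x, 𝔼 a, φ (update x i a) = 𝔼 x, φ x := by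
  let e := Equiv.funSplitAt i α
  have hupdate : ∀ a b x', update (e.symm (b, x')) i a = e.symm (a, x') := by
    intro a b x'
    ext j
    by_cases hj : j = i
    · subst hj; simp [e]
    · simp [e, hj]
  calc 𝔼 x, 𝔼 a, φ (update x i a)
      = 𝔼 p : α × ({ j // j ≠ i } → α), 𝔼 a, φ (e.symm (a, p.2)) :=
        Fintype.expect_equiv e _ _ fun x => by
          conv_lhs => rw [← e.symm_apply_apply x]
          simp only [hupdate]
    _ = 𝔼 x' : { j // j ≠ i } → α, 𝔼 a, φ (e.symm (a, x')) := by
        rw [← Finset.univ_product_univ, Finset.expect_product]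
        simp only [Fintype.expect_const]
    _ = 𝔼 x, φ x := by
        rw [Finset.expect_comm, ← Finset.expect_product' (f := fun a x' => φ (e.symm (a, x')))]
        exact Fintype.expect_equiv e.symm _ _ fun _ => rfl

theorem Fintype.expect_expect_update_update [Nonempty α] [Nonempty β]
    (φ : (ι → α) → (κ → β) → M) (i : ι) (j : κ) :
    𝔼 x, 𝔼 y, 𝔼 a, 𝔼 b, φ (update x i a) (update y j b) = 𝔼 x, 𝔼 y, φ x y := by
  calc 𝔼 x, 𝔼 y, 𝔼 a, 𝔼 b, φ (update x i a) (update y j b)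
      = 𝔼 x, 𝔼 a, 𝔼 y, 𝔼 b, φ (update x i a) (update y j b) := by
        simp_rw [Finset.expect_comm univ (univ : Finset α)]
    _ = 𝔼 x, 𝔼 a, 𝔼 y, φ (update x i a) y := by
        simp_rw [Fintype.expect_expect_update (φ (update _ i _)) j]
    _ = 𝔼 x, 𝔼 y, φ x y := Fintype.expect_expect_update (fun x => 𝔼 y, φ x y) i

end Resampling

theorem Fintype.expect_expect_eq_sum_sum_div {α β K : Type*} [Fintype α] [Fintype β]
    [Semifield K] [CharZero K] (φ : α → β → K) :
    𝔼 a, 𝔼 b, φ a b = (∑ a, ∑ b, φ a b) / (Fintype.card α * Fintype.card β) := by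
  simp only [Fintype.expect_eq_sum_div_card, ← Finset.sum_div, div_div, mul_comm]

theorem CombinatoriallySpread.expect_le {Ω₁ Ω₂ : Type*} [Fintype Ω₁] [Fintype Ω₂]
    {T : Set (Ω₁ × Ω₂)} {τ γ : ℝ} (hT : CombinatoriallySpread T τ γ) {f : Ω₁ → ℝ}
    {g : Ω₂ → ℝ} (hf : ∀ x, f x ∈ Set.Icc (0 : ℝ) 1) (hg : ∀ y, g y ∈ Set.Icc (0 : ℝ) 1) :
    𝔼 x, 𝔼 y, f x * g y * T.indicator (fun _ => (1 : ℝ)) (x, y) ≤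
      τ * ((𝔼 x, f x) * 𝔼 y, g y) + γ := by
  rw [Fintype.expect_expect_eq_sum_sum_div, Fintype.expect_eq_sum_div_card,
    Fintype.expect_eq_sum_div_card, ← mul_assoc]
  exact hT f g hf hg

theorem Finset.prod_update_update {ι κ α β R : Type*} [DecidableEq ι] [DecidableEq κ]
    [CommMonoid R] {S : Finset (ι × κ)} {i : ι} {j : κ} (hij : (i, j) ∉ S)
    (f : ι × κ → α → β → R) (x : ι → α) (y : κ → β) (a : α) (b : β) :
    ∏ p ∈ S, f p (update x i a p.1) (update y j b p.2) =
      (∏ p ∈ S with p.2 ≠ j, f p (update x i a p.1) (y p.2)) *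
        ∏ p ∈ S with p.2 = j, f p (x p.1) (update y j b p.2) := by
  rw [← Finset.prod_filter_not_mul_prod_filter S (fun p => p.2 = j)]
  congr 1
  · refine Finset.prod_congr rfl fun p hp => ?_
    rw [update_of_ne (Finset.mem_filter.1 hp).2]
  · refine Finset.prod_congr rfl fun p hp => ?_
    obtain ⟨hpS, hpj⟩ := Finset.mem_filter.1 hp
    have hpi : p.1 ≠ i := fun hpi => hij (by rwa [← hpi, ← hpj])
    rw [update_of_ne hpi]

theorem counting_lemma_general
    (Ω₁ Ω₂ : Type*) [Fintype Ω₁] [Fintype Ω₂] [Nonempty Ω₁] [Nonempty Ω₂]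
    (τ γ : ℝ)
    (T : Set (Ω₁ × Ω₂)) (hT : CombinatoriallySpread T τ γ)
    (k l : ℕ) (E : Finset (Fin k × Fin l)) (istar : Fin k) (jstar : Fin l)
    (f : Fin k → Fin l → Ω₁ → Ω₂ → ℝ)
    (hf : ∀ p ∈ E.erase (istar, jstar), ∀ x y, f p.1 p.2 x y ∈ Set.Icc (0 : ℝ) 1) :
    (∑ x : Fin k → Ω₁, ∑ y : Fin l → Ω₂,
        T.indicator (fun _ => (1 : ℝ)) (x istar, y jstar) *
          ∏ p ∈ E.erase (istar, jstar), f p.1 p.2 (x p.1) (y p.2)) /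
        ((Fintype.card Ω₁ : ℝ) ^ k * (Fintype.card Ω₂ : ℝ) ^ l) ≤
      τ * ((∑ x : Fin k → Ω₁, ∑ y : Fin l → Ω₂,
          ∏ p ∈ E.erase (istar, jstar), f p.1 p.2 (x p.1) (y p.2)) /
        ((Fintype.card Ω₁ : ℝ) ^ k * (Fintype.card Ω₂ : ℝ) ^ l)) + γ := by
  set S := E.erase (istar, jstar)
  let F : (Fin k → Ω₁) → (Fin l → Ω₂) → Ω₁ → ℝ := fun x y a =>
    ∏ p ∈ S with p.2 ≠ jstar, f p.1 p.2 (update x istar a p.1) (y p.2)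
  let G : (Fin k → Ω₁) → (Fin l → Ω₂) → Ω₂ → ℝ := fun x y b =>
    ∏ p ∈ S with p.2 = jstar, f p.1 p.2 (x p.1) (update y jstar b p.2)
  have hweight x y a b : ∏ p ∈ S, f p.1 p.2 (update x istar a p.1) (update y jstar b p.2) =
      F x y a * G x y b :=
    prod_update_update (Finset.notMem_erase _ _) (fun p => f p.1 p.2) x y a b
  have hF x y a : F x y a ∈ Set.Icc (0 : ℝ) 1 :=
    unitInterval.prod_mem fun p hp => hf p (mem_filter.1 hp).1 _ _
  have hG x y b : G x y b ∈ Set.Icc (0 : ℝ) 1 :=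
    unitInterval.prod_mem fun p hp => hf p (mem_filter.1 hp).1 _ _
  have hcard : (Fintype.card Ω₁ : ℝ) ^ k * (Fintype.card Ω₂ : ℝ) ^ l =
      Fintype.card (Fin k → Ω₁) * Fintype.card (Fin l → Ω₂) := by
    simp only [Fintype.card_fun, Fintype.card_fin, Nat.cast_pow]
  rw [hcard, ← Fintype.expect_expect_eq_sum_sum_div, ← Fintype.expect_expect_eq_sum_sum_div]
  calc 𝔼 x : Fin k → Ω₁, 𝔼 y : Fin l → Ω₂, T.indicator (fun _ => (1 : ℝ)) (x istar, y jstar) *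
        ∏ p ∈ S, f p.1 p.2 (x p.1) (y p.2)
      = 𝔼 x, 𝔼 y, 𝔼 a, 𝔼 b, F x y a * G x y b * T.indicator (fun _ => (1 : ℝ)) (a, b) := by
        rw [← Fintype.expect_expect_update_update _ istar jstar]
        simp only [update_self, hweight, mul_comm]
    _ ≤ 𝔼 x, 𝔼 y, (τ * ((𝔼 a, F x y a) * 𝔼 b, G x y b) + γ) :=
        expect_le_expect fun x _ => expect_le_expect fun y _ =>
          hT.expect_le (hF x y) (hG x y)
    _ = τ * 𝔼 x, 𝔼 y, 𝔼 a, 𝔼 b, F x y a * G x y b + γ := by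
        simp only [expect_add_distrib, Fintype.expect_const, ← mul_expect,
          Fintype.expect_mul_expect]
    _ = τ * 𝔼 x : Fin k → Ω₁, 𝔼 y : Fin l → Ω₂, ∏ p ∈ S, f p.1 p.2 (x p.1) (y p.2) + γ := by
        rw [← Fintype.expect_expect_update_update (fun x y => ∏ p ∈ S, f p.1 p.2 (x p.1) (y p.2))
          istar jstar]
        simp only [hweight]

/-- Counting lemma (Lemma 3.2 of the paper): counts of bipartite graphs where one
edge is replaced by a combinatorially spread set. -/
theorem counting_lemma
    (Ω₁ Ω₂ : Type*) [Fintype Ω₁] [Fintype Ω₂] [Nonempty Ω₁] [Nonempty Ω₂]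
    (τ γ : ℝ) (hτ : 0 < τ) (hγ : 0 < γ)
    (T : Set (Ω₁ × Ω₂)) (hT : CombinatoriallySpread T τ γ)
    (k l : ℕ) (E : Finset (Fin k × Fin l)) (istar : Fin k) (jstar : Fin l)
    (hmem : (istar, jstar) ∈ E)
    (f : Fin k → Fin l → Ω₁ → Ω₂ → ℝ)
    (hf : ∀ p ∈ E.erase (istar, jstar), ∀ x y, f p.1 p.2 x y ∈ Set.Icc (0 : ℝ) 1) :
    (∑ x : Fin k → Ω₁, ∑ y : Fin l → Ω₂,
        T.indicator (fun _ => (1 : ℝ)) (x istar, y jstar) *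
          ∏ p ∈ E.erase (istar, jstar), f p.1 p.2 (x p.1) (y p.2)) /
        ((Fintype.card Ω₁ : ℝ) ^ k * (Fintype.card Ω₂ : ℝ) ^ l) ≤
      τ * ((∑ x : Fin k → Ω₁, ∑ y : Fin l → Ω₂,
          ∏ p ∈ E.erase (istar, jstar), f p.1 p.2 (x p.1) (y p.2)) /
        ((Fintype.card Ω₁ : ℝ) ^ k * (Fintype.card Ω₂ : ℝ) ^ l)) + γ :=
  counting_lemma_general Ω₁ Ω₂ τ γ T hT k l E istar jstar f hf
end

section
/- Let Ω₁, Ω₂ be finite nonempty sets, τ > 0, A : Ω₁ × Ω₂ → ℝ, and f₁ : Ω₁ → [0,1], f₂ : Ω₂ → [0,1] functions such that E_{x∈Ω₁, y∈Ω₂}[f₁(x)·f₂(y)·A(x,y)] ≥ τ · E_{x∈Ω₁, y∈Ω₂}[f₁(x)·f₂(y)]. Then there exist functions g₁ : Ω₁ → {0,1} and g₂ : Ω₂ → {0,1} with E_{x∈Ω₁, y∈Ω₂}[g₁(x)·g₂(y)·A(x,y)] ≥ τ · E_{x∈Ω₁, y∈Ω₂}[g₁(x)·g₂(y)], and with E_{x∈Ω₁}[g₁(x)]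 ≥ E_{x∈Ω₁}[f₁(x)]/2 and E_{y∈Ω₂}[g₂(y)] ≥ E_{y∈Ω₂}[f₂(y)]/2. -/
open Finset

lemma exists_min_subset {Ω : Type*} [DecidableEq Ω] (N : Finset Ω) (a : Ω → ℝ) :
    ∀ j : ℕ, j ≤ N.card →
      ∃ T ⊆ N, T.card = j ∧ ∀ x ∈ T, ∀ y ∈ N, y ∉ T → a x ≤ a y := by
  intro j
  induction j with
  | zero => exact fun _ => ⟨∅, empty_subset _, rfl, by simp⟩
  | succ j ih =>
    intro hj
    obtain ⟨T, hTN, hTc, hTmin⟩ := ih (le_of_lt (Nat.lt_of_succ_le hj))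
    have hne : (N \ T).Nonempty := by
      rw [← card_pos, card_sdiff_of_subset hTN]; omega
    obtain ⟨m, hm, hmin⟩ := (N \ T).exists_min_image a hne
    obtain ⟨hmN, hmT⟩ := mem_sdiff.mp hm
    refine ⟨insert m T, insert_subset hmN hTN, ?_, ?_⟩
    · rw [card_insert_of_notMem hmT, hTc]
    · intro x hx y hy hyT
      rcases mem_insert.mp hx with rfl | hxT
      · exact hmin y (mem_sdiff.mpr ⟨hy, fun h => hyT (mem_insert_of_mem h)⟩)
      · exact hTmin x hxT y hy (fun h => hyT (mem_insert_of_mem h))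

lemma sum_min_le {Ω : Type*} [DecidableEq Ω] (N T : Finset Ω) (a f : Ω → ℝ)
    (hTN : T ⊆ N) (ha : ∀ y ∈ N, 0 ≤ a y)
    (hf0 : ∀ x, 0 ≤ f x) (hf1 : ∀ x, f x ≤ 1)
    (hmin : ∀ x ∈ T, ∀ y ∈ N, y ∉ T → a x ≤ a y)
    (hw : (T.card : ℝ) ≤ ∑ y ∈ N, f y) :
    ∑ x ∈ T, a x ≤ ∑ y ∈ N, f y * a y := by
  have hsplit : ∀ F : Ω → ℝ, ∑ y ∈ N, F y = ∑ y ∈ T, F y + ∑ y ∈ N \ T, F y := by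
    intro F; rw [add_comm, Finset.sum_sdiff hTN]
  by_cases hne : (N \ T).Nonempty
  · obtain ⟨c, hc, hcmin⟩ := (N \ T).exists_min_image a hne
    obtain ⟨hcN, hcT⟩ := mem_sdiff.mp hc
    have hc0 : 0 ≤ a c := ha c hcN
    have h1 : a c * ∑ y ∈ N \ T, f y ≤ ∑ y ∈ N \ T, f y * a y := by
      rw [Finset.mul_sum]
      apply Finset.sum_le_sum
      intro y hy
      have h2 := hcmin y hy
      have := hf0 y
      nlinarith
    have h2 : (T.card : ℝ) - ∑ y ∈ T, f y ≤ ∑ y ∈ N \ T, f y := by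
      have := hsplit f; linarith
    have h3 : ∑ x ∈ T, a x ≤ ∑ x ∈ T, (f x * a x + a c * (1 - f x)) := by
      apply Finset.sum_le_sum
      intro x hx
      have hax : a x ≤ a c := hmin x hx c hcN hcT
      have := hf1 x
      nlinarith
    have h5 : ∑ x ∈ T, (f x * a x + a c * (1 - f x))
        = ∑ x ∈ T, f x * a x + a c * ((T.card : ℝ) - ∑ x ∈ T, f x) := by
      rw [Finset.sum_add_distrib, ← Finset.mul_sum, Finset.sum_sub_distrib,
        Finset.sum_const, nsmul_eq_mul, mul_one]
    have h6 : a c * ((T.card : ℝ) - ∑ x ∈ T, f x) ≤ a c * ∑ y ∈ N \ T, f y :=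
      mul_le_mul_of_nonneg_left h2 hc0
    have h7 := hsplit (fun y => f y * a y)
    linarith
  · have hTN' : T = N := by
      have : N \ T = ∅ := not_nonempty_iff_eq_empty.mp hne
      exact Finset.Subset.antisymm hTN (sdiff_eq_empty_iff_subset.mp this)
    subst hTN'
    have hnn : ∀ x ∈ T, 0 ≤ 1 - f x := fun x _ => by linarith [hf1 x]
    have hsum : ∑ x ∈ T, (1 - f x) = 0 := by
      have hle : ∑ x ∈ T, (1 - f x) ≤ 0 := by
        rw [Finset.sum_sub_distrib, Finset.sum_const, nsmul_eq_mul, mul_one]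
        linarith
      linarith [Finset.sum_nonneg hnn]
    have hf1' := (Finset.sum_eq_zero_iff_of_nonneg hnn).mp hsum
    apply Finset.sum_le_sum
    intro x hx
    have : f x = 1 := by have := hf1' x hx; linarith
    rw [this, one_mul]

lemma lemA {Ω : Type*} [Fintype Ω] (f h : Ω → ℝ)
    (hf0 : ∀ x, 0 ≤ f x) (hf1 : ∀ x, f x ≤ 1)
    (hfh : 0 ≤ ∑ x, f x * h x) :
    ∃ g : Ω → ℝ, (∀ x, g x = 0 ∨ g x = 1) ∧ 0 ≤ ∑ x, g x * h x ∧
      ∑ x, f x ≤ 2 * ∑ x, g x := by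
  classical
  set P := univ.filter (fun x : Ω => 0 ≤ h x) with hPdef
  set N := univ.filter (fun x : Ω => ¬ 0 ≤ h x) with hNdef
  have hsplit : ∀ F : Ω → ℝ, ∑ x, F x = ∑ x ∈ P, F x + ∑ x ∈ N, F x := by
    intro F; rw [hPdef, hNdef, Finset.sum_filter_add_sum_filter_not]
  have hPh : ∀ x ∈ P, 0 ≤ h x := fun x hx => (mem_filter.mp hx).2
  have hNh : ∀ x ∈ N, h x < 0 := fun x hx => lt_of_not_ge (mem_filter.mp hx).2
  have hPf : ∑ x ∈ P, f x ≤ (P.card : ℝ) := by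
    calc ∑ x ∈ P, f x ≤ ∑ _x ∈ P, (1 : ℝ) := Finset.sum_le_sum fun x _ => hf1 x
    _ = P.card := by rw [Finset.sum_const, nsmul_eq_mul, mul_one]
  have ind : ∀ S : Finset Ω,
      ∃ g : Ω → ℝ, (∀ x, g x = 0 ∨ g x = 1) ∧
        (∑ x, g x * h x) = ∑ x ∈ S, h x ∧ (∑ x, g x) = S.card := by
    intro S
    refine ⟨fun x => if x ∈ S then 1 else 0,
      fun x => by by_cases hx : x ∈ S <;> simp [hx], ?_, ?_⟩
    · calc ∑ x, (if x ∈ S then (1:ℝ) else 0) * h x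
          = ∑ x, (if x ∈ S then h x else 0) := by
            apply Finset.sum_congr rfl
            intro x _; by_cases hx : x ∈ S <;> simp [hx]
        _ = ∑ x ∈ univ ∩ S, h x := Finset.sum_ite_mem _ _ _
        _ = ∑ x ∈ S, h x := by rw [univ_inter]
    · calc ∑ x, (if x ∈ S then (1:ℝ) else 0)
          = ∑ x ∈ univ ∩ S, (1:ℝ) := Finset.sum_ite_mem _ _ _
        _ = S.card := by rw [univ_inter, Finset.sum_const, nsmul_eq_mul, mul_one]
  set m' := ∑ x, f x with hm'
  by_cases hcase : m' ≤ 2 * (P.card : ℝ)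
  · obtain ⟨g, hgb, hgh, hgs⟩ := ind P
    exact ⟨g, hgb, by rw [hgh]; exact Finset.sum_nonneg hPh, by rw [hgs]; linarith⟩
  · push_neg at hcase
    -- P is nonempty
    have hPne : 0 < P.card := by
      by_contra hP0
      have hPe : P = ∅ := card_eq_zero.mp (by omega)
      have hallN : ∀ x, h x < 0 := by
        intro x
        by_contra hx
        have : x ∈ P := mem_filter.mpr ⟨mem_univ x, not_lt.mp hx⟩
        simp [hPe] at this
      have hterm : ∀ x ∈ (univ : Finset Ω), f x * h x ≤ 0 := fun x _ =>
        mul_nonpos_of_nonneg_of_nonpos (hf0 x) (hallN x).le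
      have hzero : ∀ x ∈ (univ : Finset Ω), f x * h x = 0 := by
        intro x hx
        have hsum0 : ∑ x, f x * h x = 0 :=
          le_antisymm (Finset.sum_nonpos hterm) hfh
        have hnn : ∀ x ∈ (univ : Finset Ω), 0 ≤ -(f x * h x) := fun x hx' => by
          linarith [hterm x hx']
        have : ∑ x, -(f x * h x) = 0 := by rw [Finset.sum_neg_distrib, hsum0, neg_zero]
        have := (Finset.sum_eq_zero_iff_of_nonneg hnn).mp this x hx
        linarith
      have hf0' : ∀ x, f x = 0 := by
        intro x
        have := hzero x (mem_univ x)
        rcases mul_eq_zero.mp this with h1 | h2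
        · exact h1
        · exact absurd h2 (ne_of_lt (hallN x))
      have : m' = 0 := by rw [hm']; exact Finset.sum_eq_zero fun x _ => hf0' x
      rw [this] at hcase
      have : (0:ℝ) ≤ P.card := Nat.cast_nonneg _
      linarith
    have hm2 : 2 ≤ m' := by
      have : (1:ℝ) ≤ P.card := by exact_mod_cast hPne
      linarith
    set k := ⌈m' / 2⌉₊ with hk
    have hkm : (k : ℝ) ≤ m' := by
      have h1 : (k : ℝ) < m' / 2 + 1 := Nat.ceil_lt_add_one (by linarith)
      linarith
    have hpk : P.card < k := by
      have h1 : (P.card : ℝ) < m' / 2 := by linarith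
      have h2 : (m' / 2 : ℝ) ≤ k := Nat.le_ceil _
      exact_mod_cast h1.trans_le h2
    have hcard : P.card + N.card = Fintype.card Ω := by
      rw [hPdef, hNdef]
      exact Finset.card_filter_add_card_filter_not _
    have hmn : m' ≤ (Fintype.card Ω : ℝ) := by
      calc m' = ∑ x, f x := hm'
        _ ≤ ∑ _x : Ω, (1:ℝ) := Finset.sum_le_sum fun x _ => hf1 x
        _ = Fintype.card Ω := by rw [Finset.sum_const, nsmul_eq_mul, mul_one, card_univ]
    have hkn : k ≤ Fintype.card Ω := by
      have : (k:ℝ) ≤ (Fintype.card Ω : ℝ) := hkm.trans hmn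
      exact_mod_cast this
    set j := k - P.card with hj
    have hjN : j ≤ N.card := by omega
    have hpj : P.card + j = k := by omega
    obtain ⟨T, hTN, hTc, hTmin⟩ := exists_min_subset N (fun x => -h x) j hjN
    have hNf : (j : ℝ) ≤ ∑ y ∈ N, f y := by
      have h1 : ∑ y ∈ N, f y = m' - ∑ x ∈ P, f x := by
        have := hsplit f; rw [hm']; linarith
      have h2 : (j:ℝ) = (k:ℝ) - (P.card:ℝ) := by
        rw [hj]
        push_cast [Nat.cast_sub (le_of_lt hpk)]
        ring
      rw [h1, h2]
      linarith
    have hTsum : ∑ x ∈ T, (-h x) ≤ ∑ y ∈ N, f y * (-h y) := by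
      apply sum_min_le N T (fun x => -h x) f hTN
        (fun y hy => by show (0:ℝ) ≤ -h y; linarith [hNh y hy]) hf0 hf1 hTmin
      rw [hTc]; exact hNf
    have hTh : ∑ y ∈ N, f y * h y ≤ ∑ x ∈ T, h x := by
      have e1 : ∑ x ∈ T, (-h x) = -∑ x ∈ T, h x := by rw [Finset.sum_neg_distrib]
      have e2 : ∑ y ∈ N, f y * (-h y) = -∑ y ∈ N, f y * h y := by
        rw [← Finset.sum_neg_distrib]
        exact Finset.sum_congr rfl fun y _ => by ring
      rw [e1, e2] at hTsum
      linarith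
    have hdisj : Disjoint P T := by
      apply Finset.disjoint_left.mpr
      intro x hxP hxT
      exact (mem_filter.mp (hTN hxT)).2 (mem_filter.mp hxP).2
    obtain ⟨g, hgb, hgh, hgs⟩ := ind (P ∪ T)
    refine ⟨g, hgb, ?_, ?_⟩
    · rw [hgh, Finset.sum_union hdisj]
      have hPfh : ∑ x ∈ P, f x * h x ≤ ∑ x ∈ P, h x := by
        apply Finset.sum_le_sum
        intro x hx
        have := hPh x hx
        nlinarith [hf1 x]
      have := hsplit (fun x => f x * h x)
      linarith
    · rw [hgs, card_union_of_disjoint hdisj, hTc]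
      have : ((P.card + j : ℕ) : ℝ) = (k:ℝ) := by exact_mod_cast congrArg (Nat.cast (R := ℝ)) hpj
      push_cast
      have h2 : (m' / 2 : ℝ) ≤ k := Nat.le_ceil _
      have : (P.card : ℝ) + (j:ℝ) = (k:ℝ) := by exact_mod_cast hpj
      linarith


/-- Extraction of a correlated rectangle with boolean sides from a correlated
rectangle with `[0,1]`-valued sides (Lemma 3.3 of the paper). -/
theorem extract_boolean_correlation
    (Ω₁ Ω₂ : Type*) [Fintype Ω₁] [Fintype Ω₂] [Nonempty Ω₁] [Nonempty Ω₂]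
    (τ : ℝ) (hτ : 0 < τ) (A : Ω₁ → Ω₂ → ℝ) (f₁ : Ω₁ → ℝ) (f₂ : Ω₂ → ℝ)
    (hf₁ : ∀ x, f₁ x ∈ Set.Icc (0 : ℝ) 1) (hf₂ : ∀ y, f₂ y ∈ Set.Icc (0 : ℝ) 1)
    (h : τ * ((∑ x : Ω₁, ∑ y : Ω₂, f₁ x * f₂ y) /
            ((Fintype.card Ω₁ : ℝ) * (Fintype.card Ω₂ : ℝ))) ≤
        (∑ x : Ω₁, ∑ y : Ω₂, f₁ x * f₂ y * A x y) /
          ((Fintype.card Ω₁ : ℝ) * (Fintype.card Ω₂ : ℝ))) :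
    ∃ (g₁ : Ω₁ → ℝ) (g₂ : Ω₂ → ℝ),
      (∀ x, g₁ x = 0 ∨ g₁ x = 1) ∧ (∀ y, g₂ y = 0 ∨ g₂ y = 1) ∧
      τ * ((∑ x : Ω₁, ∑ y : Ω₂, g₁ x * g₂ y) /
            ((Fintype.card Ω₁ : ℝ) * (Fintype.card Ω₂ : ℝ))) ≤
        (∑ x : Ω₁, ∑ y : Ω₂, g₁ x * g₂ y * A x y) /
          ((Fintype.card Ω₁ : ℝ) * (Fintype.card Ω₂ : ℝ)) ∧
      ((∑ x : Ω₁, f₁ x) / (Fintype.card Ω₁ : ℝ)) / 2 ≤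
        (∑ x : Ω₁, g₁ x) / (Fintype.card Ω₁ : ℝ) ∧
      ((∑ y : Ω₂, f₂ y) / (Fintype.card Ω₂ : ℝ)) / 2 ≤
        (∑ y : Ω₂, g₂ y) / (Fintype.card Ω₂ : ℝ) := by
  have hn₁ : (0:ℝ) < (Fintype.card Ω₁ : ℝ) := by
    exact_mod_cast Fintype.card_pos
  have hn₂ : (0:ℝ) < (Fintype.card Ω₂ : ℝ) := by
    exact_mod_cast Fintype.card_pos
  have hD : (0:ℝ) < (Fintype.card Ω₁ : ℝ) * (Fintype.card Ω₂ : ℝ) := mul_pos hn₁ hn₂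
  -- clear denominators in hypothesis
  have hmain : τ * (∑ x : Ω₁, ∑ y : Ω₂, f₁ x * f₂ y)
      ≤ ∑ x : Ω₁, ∑ y : Ω₂, f₁ x * f₂ y * A x y := by
    rw [← mul_div_assoc, div_le_div_iff₀ hD hD] at h
    exact le_of_mul_le_mul_right h hD
  -- first rounding
  have hH₁ : 0 ≤ ∑ x : Ω₁, f₁ x * (∑ y : Ω₂, f₂ y * (A x y - τ)) := by
    have e : ∑ x : Ω₁, f₁ x * (∑ y : Ω₂, f₂ y * (A x y - τ))
        = (∑ x : Ω₁, ∑ y : Ω₂, f₁ x * f₂ y * A x y)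
          - τ * (∑ x : Ω₁, ∑ y : Ω₂, f₁ x * f₂ y) := by
      rw [Finset.mul_sum, ← Finset.sum_sub_distrib]
      apply Finset.sum_congr rfl
      intro x _
      rw [Finset.mul_sum, Finset.mul_sum, ← Finset.sum_sub_distrib]
      exact Finset.sum_congr rfl fun y _ => by ring
    rw [e]; linarith
  obtain ⟨g₁, hg₁b, hg₁h, hg₁s⟩ := lemA f₁ (fun x => ∑ y : Ω₂, f₂ y * (A x y - τ))
    (fun x => (hf₁ x).1) (fun x => (hf₁ x).2) hH₁
  -- second rounding
  have hH₂ : 0 ≤ ∑ y : Ω₂, f₂ y * (∑ x : Ω₁, g₁ x * (A x y - τ)) := by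
    have e : ∑ y : Ω₂, f₂ y * (∑ x : Ω₁, g₁ x * (A x y - τ))
        = ∑ x : Ω₁, g₁ x * (∑ y : Ω₂, f₂ y * (A x y - τ)) := by
      calc ∑ y : Ω₂, f₂ y * (∑ x : Ω₁, g₁ x * (A x y - τ))
          = ∑ y : Ω₂, ∑ x : Ω₁, f₂ y * (g₁ x * (A x y - τ)) := by
            simp only [Finset.mul_sum]
        _ = ∑ x : Ω₁, ∑ y : Ω₂, f₂ y * (g₁ x * (A x y - τ)) := Finset.sum_comm
        _ = ∑ x : Ω₁, g₁ x * (∑ y : Ω₂, f₂ y * (A x y - τ)) := by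
            apply Finset.sum_congr rfl
            intro x _
            rw [Finset.mul_sum]
            exact Finset.sum_congr rfl fun y _ => by ring
    rw [e]; exact hg₁h
  obtain ⟨g₂, hg₂b, hg₂h, hg₂s⟩ := lemA f₂ (fun y => ∑ x : Ω₁, g₁ x * (A x y - τ))
    (fun y => (hf₂ y).1) (fun y => (hf₂ y).2) hH₂
  refine ⟨g₁, g₂, hg₁b, hg₂b, ?_, ?_, ?_⟩
  · have e : ∑ y : Ω₂, g₂ y * (∑ x : Ω₁, g₁ x * (A x y - τ))
        = (∑ x : Ω₁, ∑ y : Ω₂, g₁ x * g₂ y * A x y)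
          - τ * (∑ x : Ω₁, ∑ y : Ω₂, g₁ x * g₂ y) := by
      calc ∑ y : Ω₂, g₂ y * (∑ x : Ω₁, g₁ x * (A x y - τ))
          = ∑ y : Ω₂, ∑ x : Ω₁, g₂ y * (g₁ x * (A x y - τ)) := by
            simp only [Finset.mul_sum]
        _ = ∑ x : Ω₁, ∑ y : Ω₂, g₂ y * (g₁ x * (A x y - τ)) := Finset.sum_comm
        _ = ∑ x : Ω₁, ((∑ y : Ω₂, g₁ x * g₂ y * A x y) - τ * ∑ y : Ω₂, g₁ x * g₂ y) := by
            apply Finset.sum_congr rfl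
            intro x _
            rw [Finset.mul_sum, ← Finset.sum_sub_distrib]
            exact Finset.sum_congr rfl fun y _ => by ring
        _ = (∑ x : Ω₁, ∑ y : Ω₂, g₁ x * g₂ y * A x y)
            - τ * (∑ x : Ω₁, ∑ y : Ω₂, g₁ x * g₂ y) := by
            rw [Finset.sum_sub_distrib, ← Finset.mul_sum]
    rw [e] at hg₂h
    rw [← mul_div_assoc, div_le_div_iff₀ hD hD]
    nlinarith
  · rw [div_div, div_le_div_iff₀ (by linarith) hn₁]
    nlinarith
  · rw [div_div, div_le_div_iff₀ (by linarith) hn₂]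
    nlinarith
end

section
/- Gowers–Hölder inequality for grids: Fix positive integers k, ℓ and finite nonempty sets X, Y. For each i ∈ [k] and j ∈ [ℓ] let f_{ij} : X × Y → ℝ≥0 be a nonnegative function. Then E_{x₁,…,x_k ∈ X, y₁,…,y_ℓ ∈ Y}[∏_{i∈[k], j∈[ℓ]} f_{ij}(x_i, y_j)] ≤ ∏_{i∈[k], j∈[ℓ]} ( E_{x₁,…,x_k ∈ X, y₁,…,y_ℓ ∈ Y}[∏_{i'∈[k], j'∈[ℓ]} f_{ij}(x_{i'}, y_{j'})] )^{1/(kℓ)}. -/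
/-!
Summing out `x` first, the left-hand side becomes `∑ y, ∏ i, A i y` with
`A i y = ∑ x, ∏ j, f i j x (y j)`. Hölder's inequality over the `k` rows bounds this by
`∏ i, (∑ y, A i y ^ k) ^ (1 / k)`, and `∑ y, A i y ^ k` is again a grid sum, of the family
`f i j` that no longer depends on the row. Transposing the grid and repeating the step over
the `l` columns leaves the grid sums of the constant families `f i j`. The normalisation is
harmless because the `k * l` exponents `1 / (k * l)` add up to `1`.
-/

open Finset MeasureTheory

theorem Real.sum_prod_rpow_le_prod_sum_rpow {ι Ω : Type*} [Fintype Ω] (s : Finset ι)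
    {F : ι → Ω → ℝ} (hF : ∀ i ω, 0 ≤ F i ω) {p : ι → ℝ} (hp : ∑ i ∈ s, p i = 1)
    (hp₀ : ∀ i ∈ s, 0 ≤ p i) :
    ∑ ω, ∏ i ∈ s, F i ω ^ p i ≤ ∏ i ∈ s, (∑ ω, F i ω) ^ p i := by
  let : MeasurableSpace Ω := ⊤
  have h := ENNReal.lintegral_prod_norm_pow_le (μ := Measure.count) s
    (f := fun i ω => ENNReal.ofReal (F i ω)) (fun _ _ => measurable_from_top.aemeasurable) hp hp₀
  have hsum : ∀ i, 0 ≤ ∑ ω, F i ω := fun i => sum_nonneg fun ω _ => hF i ω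
  simp only [lintegral_fintype, Measure.count_singleton, mul_one,
    ← ENNReal.ofReal_sum_of_nonneg (fun ω _ => hF _ ω)] at h
  rw [← ENNReal.ofReal_le_ofReal_iff (prod_nonneg fun i _ => Real.rpow_nonneg (hsum i) _),
    ENNReal.ofReal_sum_of_nonneg (fun _ _ => prod_nonneg fun i _ => Real.rpow_nonneg (hF i _) _),
    ENNReal.ofReal_prod_of_nonneg (fun _ _ => Real.rpow_nonneg (hsum _) _)]
  convert h using 1
  · refine sum_congr rfl fun ω _ => ?_
    rw [ENNReal.ofReal_prod_of_nonneg (fun _ _ => Real.rpow_nonneg (hF _ ω) _)]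
    exact prod_congr rfl fun i hi => (ENNReal.ofReal_rpow_of_nonneg (hF i ω) (hp₀ i hi)).symm
  · exact prod_congr rfl fun i hi => (ENNReal.ofReal_rpow_of_nonneg (hsum i) (hp₀ i hi)).symm

theorem Real.sum_prod_le_prod_sum_pow_card {ι Ω : Type*} [Fintype ι] [Nonempty ι] [Fintype Ω]
    {F : ι → Ω → ℝ} (hF : ∀ i ω, 0 ≤ F i ω) :
    ∑ ω, ∏ i, F i ω ≤ ∏ i, (∑ ω, F i ω ^ Fintype.card ι) ^ (Fintype.card ι : ℝ)⁻¹ := by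
  have hn : (Fintype.card ι : ℝ) ≠ 0 := by positivity
  have h := Real.sum_prod_rpow_le_prod_sum_rpow univ (F := fun i ω => F i ω ^ Fintype.card ι)
    (fun i ω => pow_nonneg (hF i ω) _) (p := fun _ => (Fintype.card ι : ℝ)⁻¹)
    (by simp [hn]) (fun _ _ => by positivity)
  refine le_of_eq_of_le (sum_congr rfl fun ω _ => prod_congr rfl fun i _ => ?_) h
  rw [← Real.rpow_natCast, ← Real.rpow_mul (hF i ω), mul_inv_cancel₀ hn, Real.rpow_one]

theorem Real.prod_const_rpow_inv_card {α : Type*} [Fintype α] [Nonempty α] {a : ℝ} (ha : 0 ≤ a) :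
    ∏ _ : α, a ^ (Fintype.card α : ℝ)⁻¹ = a := by
  rw [prod_const, card_univ, ← Real.rpow_natCast, ← Real.rpow_mul ha,
    inv_mul_cancel₀ (by positivity), Real.rpow_one]

section Grid

variable {ι κ X Y : Type*} [Fintype ι] [DecidableEq ι] [Fintype κ] [DecidableEq κ]
  [Fintype X] [Fintype Y]

def gridSum (f : ι → κ → X → Y → ℝ) : ℝ :=
  ∑ x : ι → X, ∑ y : κ → Y, ∏ i, ∏ j, f i j (x i) (y j)

theorem gridSum_nonneg {f : ι → κ → X → Y → ℝ} (hf : ∀ i j x y, 0 ≤ f i j x y) :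
    0 ≤ gridSum f :=
  sum_nonneg fun _ _ => sum_nonneg fun _ _ => prod_nonneg fun _ _ => prod_nonneg fun _ _ => hf ..

theorem gridSum_transpose (f : ι → κ → X → Y → ℝ) :
    gridSum (fun j i y x => f i j x y) = gridSum f := by
  rw [gridSum, sum_comm]
  exact sum_congr rfl fun _ _ => sum_congr rfl fun _ _ => prod_comm

theorem gridSum_eq_sum_prod_sum_prod (f : ι → κ → X → Y → ℝ) :
    gridSum f = ∑ y : κ → Y, ∏ i, ∑ x : X, ∏ j, f i j x (y j) := by
  rw [gridSum, sum_comm]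
  exact sum_congr rfl fun y _ => (Fintype.prod_sum fun i x => ∏ j, f i j x (y j)).symm

theorem gridSum_le_prod_gridSum_rpow [Nonempty ι] {f : ι → κ → X → Y → ℝ}
    (hf : ∀ i j x y, 0 ≤ f i j x y) :
    gridSum f ≤ ∏ i, gridSum (fun _ : ι => f i) ^ (Fintype.card ι : ℝ)⁻¹ := by
  rw [gridSum_eq_sum_prod_sum_prod]
  refine (Real.sum_prod_le_prod_sum_pow_card ?_).trans_eq (prod_congr rfl fun i _ => ?_)
  · exact fun i y => sum_nonneg fun x _ => prod_nonneg fun j _ => hf i j x (y j)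
  · simp_rw [gridSum_eq_sum_prod_sum_prod, prod_const, card_univ]

theorem gridSum_const_le_prod_gridSum_rpow [Nonempty κ] {g : κ → X → Y → ℝ}
    (hg : ∀ j x y, 0 ≤ g j x y) :
    gridSum (fun _ : ι => g) ≤
      ∏ j, gridSum (fun (_ : ι) (_ : κ) => g j) ^ (Fintype.card κ : ℝ)⁻¹ := by
  rw [← gridSum_transpose]
  refine (gridSum_le_prod_gridSum_rpow fun j _ y x => hg j x y).trans_eq
    (prod_congr rfl fun j _ => ?_)
  rw [gridSum_transpose (fun (_ : ι) (_ : κ) => g j)]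

theorem gridSum_le_prod_prod_gridSum_rpow [Nonempty ι] [Nonempty κ] {f : ι → κ → X → Y → ℝ}
    (hf : ∀ i j x y, 0 ≤ f i j x y) :
    gridSum f ≤ ∏ i, ∏ j,
      gridSum (fun (_ : ι) (_ : κ) => f i j) ^ ((Fintype.card ι : ℝ) * Fintype.card κ)⁻¹ := by
  refine (gridSum_le_prod_gridSum_rpow hf).trans
    (prod_le_prod (fun i _ => Real.rpow_nonneg (gridSum_nonneg fun _ => hf i) _)
      fun i _ => ?_)
  calc gridSum (fun _ : ι => f i) ^ (Fintype.card ι : ℝ)⁻¹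
      ≤ (∏ j, gridSum (fun (_ : ι) (_ : κ) => f i j) ^ (Fintype.card κ : ℝ)⁻¹) ^
          (Fintype.card ι : ℝ)⁻¹ :=
        Real.rpow_le_rpow (gridSum_nonneg fun _ => hf i)
          (gridSum_const_le_prod_gridSum_rpow (hf i)) (by positivity)
    _ = _ := by
        rw [← Real.finsetProd_rpow _ _ fun j _ =>
          Real.rpow_nonneg (gridSum_nonneg fun _ _ => hf i j) _]
        refine prod_congr rfl fun j _ => ?_
        rw [← Real.rpow_mul (gridSum_nonneg fun _ _ => hf i j), mul_inv, mul_comm]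

end Grid

theorem gowers_holder_grid_general
    (k l : ℕ) (hk : 0 < k) (hl : 0 < l)
    (X Y : Type*) [Fintype X] [Fintype Y]
    (f : Fin k → Fin l → X → Y → ℝ)
    (hf : ∀ i j x y, 0 ≤ f i j x y) :
    (∑ x : Fin k → X, ∑ y : Fin l → Y, ∏ i : Fin k, ∏ j : Fin l, f i j (x i) (y j)) /
        ((Fintype.card X : ℝ) ^ k * (Fintype.card Y : ℝ) ^ l) ≤
      ∏ i : Fin k, ∏ j : Fin l,
        ((∑ x : Fin k → X, ∑ y : Fin l → Y, ∏ i' : Fin k, ∏ j' : Fin l, f i j (x i') (y j')) /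
            ((Fintype.card X : ℝ) ^ k * (Fintype.card Y : ℝ) ^ l)) ^
          ((1 : ℝ) / ((k : ℝ) * (l : ℝ))) := by
  have : NeZero k := ⟨hk.ne'⟩
  have : NeZero l := ⟨hl.ne'⟩
  set D : ℝ := (Fintype.card X : ℝ) ^ k * (Fintype.card Y : ℝ) ^ l
  have hD : 0 ≤ D := by positivity
  have hgrid := gridSum_le_prod_prod_gridSum_rpow hf
  have hDprod := Real.prod_const_rpow_inv_card (α := Fin k × Fin l) hD
  simp only [Fintype.card_fin, Fintype.card_prod, Nat.cast_mul, Fintype.prod_prod_type]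
    at hgrid hDprod
  rw [one_div]
  calc gridSum f / D
      ≤ (∏ i, ∏ j, gridSum (fun _ _ => f i j) ^ ((k : ℝ) * l)⁻¹) / D :=
        div_le_div_of_nonneg_right hgrid hD
    _ = (∏ i, ∏ j, gridSum (fun _ _ => f i j) ^ ((k : ℝ) * l)⁻¹) /
          ∏ _i : Fin k, ∏ _j : Fin l, D ^ ((k : ℝ) * l)⁻¹ := by rw [hDprod]
    _ = ∏ i, ∏ j, (gridSum (fun _ _ => f i j) / D) ^ ((k : ℝ) * l)⁻¹ := by
        simp only [Real.div_rpow (gridSum_nonneg fun _ _ => hf _ _) hD, prod_div_distrib]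

/-- Gowers–Hölder inequality for grids (Lemma 5.7 of the paper). -/
theorem gowers_holder_grid
    (k l : ℕ) (hk : 0 < k) (hl : 0 < l)
    (X Y : Type*) [Fintype X] [Fintype Y] [Nonempty X] [Nonempty Y]
    (f : Fin k → Fin l → X → Y → ℝ)
    (hf : ∀ i j x y, 0 ≤ f i j x y) :
    (∑ x : Fin k → X, ∑ y : Fin l → Y, ∏ i : Fin k, ∏ j : Fin l, f i j (x i) (y j)) /
        ((Fintype.card X : ℝ) ^ k * (Fintype.card Y : ℝ) ^ l) ≤
      ∏ i : Fin k, ∏ j : Fin l,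
        ((∑ x : Fin k → X, ∑ y : Fin l → Y, ∏ i' : Fin k, ∏ j' : Fin l, f i j (x i') (y j')) /
            ((Fintype.card X : ℝ) ^ k * (Fintype.card Y : ℝ) ^ l)) ^
          ((1 : ℝ) / ((k : ℝ) * (l : ℝ))) :=
  gowers_holder_grid_general k l hk hl X Y f hf
end

section
/- Let ε ∈ (0, 1/10), let k be a positive integer, and let p = 6·⌈k/ε⌉. Let X be a real-valued random variable on a probability space such that |X|^p is integrable, E[X^r] ≥ 0 for every integer r with 0 ≤ r ≤ p, and E[X^k] ≥ ε^k. Then E[(X+1)^p] ≥ (1+ε/2)^p. -/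
/-!
Expand `(X + 1) ^ p` binomially: all moments up to `p` are nonnegative, so
`E (X + 1) ^ p ≥ C(p, 4k) E X ^ (4k) ≥ C(p, 4k) ε ^ (4k)`, the last step by Jensen applied to
`(X ^ k) ^ 4`. Since `pε ≈ 6k`, Stirling's upper bound `m! ≤ e √m (m/e)^m` gives
`C(p, 4k) ε ^ (4k) ≥ (7/5 · e) ^ (4k) / (e √(4k))`, which exceeds
`exp (3k + 3/10) ≥ exp (pε/2) ≥ (1 + ε/2) ^ p`.
-/

open MeasureTheory Real Nat

theorem Nat.factorial_le_exp_one_mul_sqrt_mul_pow {n : ℕ} (hn : n ≠ 0) :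
    (n ! : ℝ) ≤ exp 1 * √n * (n / exp 1) ^ n := by
  obtain ⟨m, rfl⟩ := Nat.exists_eq_succ_of_ne_zero hn
  have h : Stirling.stirlingSeq (m + 1) ≤ exp 1 / √2 := by
    simpa [Stirling.stirlingSeq_one] using Stirling.stirlingSeq'_antitone (Nat.zero_le m)
  rw [Stirling.stirlingSeq, div_le_iff₀ (by positivity)] at h
  calc ((m + 1) ! : ℝ) ≤ exp 1 / √2 * (√(2 * (m + 1 : ℕ)) * ((m + 1 : ℕ) / exp 1) ^ (m + 1)) := h
    _ = exp 1 * √(m + 1 : ℕ) * ((m + 1 : ℕ) / exp 1) ^ (m + 1) := by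
      rw [sqrt_mul zero_le_two]; field_simp

theorem exp_mul_div_pow_div_le_choose_mul_pow {n m : ℕ} (hm : m ≠ 0) (hmn : m ≤ n) {x : ℝ}
    (hx : 0 ≤ x) :
    (exp 1 * ((n + 1 - m) * x) / m) ^ m / (exp 1 * √m) ≤ n.choose m * x ^ m := by
  have hgap : (0 : ℝ) ≤ n + 1 - m := by
    have : (m : ℝ) ≤ n := by exact_mod_cast hmn
    linarith
  have hchoose := Nat.pow_le_choose (α := ℝ) m n
  rw [Nat.cast_sub (hmn.trans n.le_succ)] at hchoose
  push_cast at hchoose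
  calc (exp 1 * ((n + 1 - m) * x) / m) ^ m / (exp 1 * √m)
      = ((n + 1 - m) * x) ^ m / (exp 1 * √m * (m / exp 1) ^ m) := by
        rw [show exp 1 * ((n + 1 - m) * x) / m = (n + 1 - m) * x / (m / exp 1) by field_simp,
          div_pow, div_div]
        ring
    _ ≤ ((n + 1 - m) * x) ^ m / m ! := by
        gcongr
        exact Nat.factorial_le_exp_one_mul_sqrt_mul_pow hm
    _ = (n + 1 - m) ^ m / m ! * x ^ m := by rw [mul_pow]; ring
    _ ≤ n.choose m * x ^ m := by gcongr

theorem exp_three_mul_add_le {k : ℕ} (hk : k ≠ 0) :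
    exp (3 * k + 3 / 10) * (exp 1 * √(4 * k)) ≤ (7 / 5 * exp 1) ^ (4 * k) := by
  have he1 := exp_one_gt_d9
  have he2 := exp_one_lt_d9
  have he03 : exp (3 / 10) ≤ 10 / 7 := by
    have := exp_bound_div_one_sub_of_interval (x := 3 / 10) (by norm_num) (by norm_num)
    norm_num at this ⊢; exact this
  have hk1 : (1 : ℝ) ≤ k := by exact_mod_cast Nat.one_le_iff_ne_zero.2 hk
  have hsqrt : √(4 * k) ≤ 2 * k := (sqrt_le_left (by positivity)).2 (by nlinarith)
  have hbase : (10 : ℝ) ≤ (7 / 5) ^ 4 * exp 1 := by nlinarith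
  have hpow : 1 + k * 9 ≤ ((7 / 5) ^ 4 * exp 1) ^ k :=
    (one_add_mul_le_pow (by norm_num) k).trans (pow_le_pow_left₀ (by norm_num) (by linarith) k)
  have hsplit : (7 / 5 * exp 1) ^ (4 * k) = ((7 / 5) ^ 4 * exp 1) ^ k * exp 1 ^ (3 * k) := by
    rw [mul_pow, mul_pow, ← pow_mul]; ring
  rw [hsplit, exp_add, show (3 : ℝ) * k = (3 * k : ℕ) * 1 by push_cast; ring, exp_nat_mul]
  have hsmall : exp (3 / 10) * (exp 1 * √(4 * k)) ≤ ((7 / 5) ^ 4 * exp 1) ^ k := by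
    calc exp (3 / 10) * (exp 1 * √(4 * k)) ≤ 10 / 7 * (exp 1 * (2 * k)) := by gcongr
      _ ≤ 1 + k * 9 := by nlinarith
      _ ≤ _ := hpow
  calc exp 1 ^ (3 * k) * exp (3 / 10) * (exp 1 * √(4 * k))
      = exp 1 ^ (3 * k) * (exp (3 / 10) * (exp 1 * √(4 * k))) := by ring
    _ ≤ exp 1 ^ (3 * k) * ((7 / 5) ^ 4 * exp 1) ^ k := by gcongr
    _ = _ := by ring

theorem le_ceil_natCast_div {k : ℕ} {ε : ℝ} (hε0 : 0 < ε) (hε1 : ε ≤ 1) :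
    k ≤ ⌈(k : ℝ) / ε⌉₊ :=
  Nat.cast_le.1 ((le_div_self k.cast_nonneg hε0 hε1).trans (Nat.le_ceil _))

theorem one_add_half_pow_le_choose_mul_pow {ε : ℝ} (hε : ε ∈ Set.Ioo (0 : ℝ) (1 / 10)) {k p : ℕ}
    (hk : k ≠ 0) (hp : p = 6 * ⌈(k : ℝ) / ε⌉₊) :
    (1 + ε / 2) ^ p ≤ p.choose (4 * k) * ε ^ (4 * k) := by
  obtain ⟨hε0, hε1⟩ := hε
  have hpε : 6 * k ≤ p * ε ∧ p * ε < 6 * k + 6 * ε := by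
    have h1 := Nat.le_ceil ((k : ℝ) / ε)
    have h2 := Nat.ceil_lt_add_one (show (0 : ℝ) ≤ k / ε by positivity)
    have h3 : (k : ℝ) / ε * ε = k := div_mul_cancel₀ _ hε0.ne'
    subst hp; push_cast; constructor <;> nlinarith
  have h4k : 4 * k ≤ p := by
    have := le_ceil_natCast_div (k := k) hε0 (by linarith)
    omega
  have hgap : 7 / 5 * exp 1 ≤ exp 1 * ((p + 1 - (4 * k : ℕ)) * ε) / (4 * k : ℕ) := by
    have hkε : 28 / 5 * (k : ℝ) ≤ (p + 1 - 4 * k) * ε := by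
      nlinarith [mul_le_mul_of_nonneg_left hε1.le (Nat.cast_nonneg (α := ℝ) k)]
    rw [le_div_iff₀ (by positivity)]
    push_cast
    nlinarith [mul_le_mul_of_nonneg_left hkε (exp_pos 1).le]
  calc (1 + ε / 2) ^ p ≤ exp (ε / 2) ^ p :=
        pow_le_pow_left₀ (by positivity) (by linarith [add_one_le_exp (ε / 2)]) p
    _ = exp (p * (ε / 2)) := (exp_nat_mul _ _).symm
    _ ≤ exp (3 * k + 3 / 10) := exp_le_exp.2 (by nlinarith)
    _ ≤ (7 / 5 * exp 1) ^ (4 * k) / (exp 1 * √(4 * k : ℕ)) := by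
        rw [le_div_iff₀ (by positivity)]
        exact_mod_cast exp_three_mul_add_le hk
    _ ≤ (exp 1 * ((p + 1 - (4 * k : ℕ)) * ε) / (4 * k : ℕ)) ^ (4 * k) / (exp 1 * √(4 * k : ℕ)) := by
        gcongr
    _ ≤ p.choose (4 * k) * ε ^ (4 * k) :=
        exp_mul_div_pow_div_le_choose_mul_pow (by omega) h4k hε0.le

section Moments

variable {Ω : Type*} [MeasurableSpace Ω] {μ : Measure Ω} {X : Ω → ℝ} {p : ℕ}

theorem integrable_pow_of_integrable_abs_pow [IsFiniteMeasure μ] (hX : AEStronglyMeasurable X μ)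
    (hint : Integrable (fun ω => |X ω| ^ p) μ) {r : ℕ} (hr : r ≤ p) :
    Integrable (fun ω => X ω ^ r) μ := by
  refine ((integrable_const 1).add hint).mono' (hX.pow r) (ae_of_all _ fun ω => ?_)
  rw [norm_pow, norm_eq_abs, Pi.add_apply]
  rcases le_total |X ω| 1 with h | h
  · linarith [pow_le_one₀ (abs_nonneg (X ω)) h (n := r), pow_nonneg (abs_nonneg (X ω)) p]
  · linarith [pow_le_pow_right₀ h hr]

theorem integral_add_one_pow (hXr : ∀ r ≤ p, Integrable (fun ω => X ω ^ r) μ) :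
    ∫ ω, (X ω + 1) ^ p ∂μ = ∑ r ∈ Finset.range (p + 1), (p.choose r : ℝ) * ∫ ω, X ω ^ r ∂μ := by
  simp_rw [add_pow, one_pow, mul_one, mul_comm (X _ ^ _)]
  rw [integral_finsetSum _ fun r hr => (hXr r (Finset.mem_range_succ_iff.1 hr)).const_mul _]
  simp_rw [integral_const_mul]

theorem choose_mul_integral_pow_le_integral_add_one_pow
    (hXr : ∀ r ≤ p, Integrable (fun ω => X ω ^ r) μ)
    (hmom : ∀ r ≤ p, 0 ≤ ∫ ω, X ω ^ r ∂μ) {m : ℕ} (hm : m ≤ p) :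
    p.choose m * ∫ ω, X ω ^ m ∂μ ≤ ∫ ω, (X ω + 1) ^ p ∂μ := by
  rw [integral_add_one_pow hXr]
  exact Finset.single_le_sum (f := fun r => (p.choose r : ℝ) * ∫ ω, X ω ^ r ∂μ)
    (fun r hr => mul_nonneg (p.choose r).cast_nonneg (hmom r (Finset.mem_range_succ_iff.1 hr)))
    (Finset.mem_range_succ_iff.2 hm)

theorem pow_integral_le_integral_pow [IsProbabilityMeasure μ] {n : ℕ} (hn : Even n)
    (hX : Integrable X μ) (hXn : Integrable (fun ω => X ω ^ n) μ) :
    (∫ ω, X ω ∂μ) ^ n ≤ ∫ ω, X ω ^ n ∂μ :=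
  hn.convexOn_pow.map_integral_le (continuous_pow n).continuousOn isClosed_univ
    (ae_of_all _ fun _ => Set.mem_univ _) hX hXn

end Moments

/-- Unbalancing inequality (Lemma 4.1 of the paper): a real random variable with
nonnegative moments and a large `k`-th moment has a large `p`-th moment after
shifting by one. -/
theorem unbalancing
    (ε : ℝ) (hε : ε ∈ Set.Ioo (0 : ℝ) (1 / 10)) (k : ℕ) (hk : 0 < k)
    (p : ℕ) (hp : p = 6 * ⌈(k : ℝ) / ε⌉₊)
    (Ω : Type*) [MeasurableSpace Ω] (μ : Measure Ω) [IsProbabilityMeasure μ]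
    (X : Ω → ℝ) (hX : Measurable X)
    (hint : Integrable (fun ω => |X ω| ^ p) μ)
    (hmom : ∀ r : ℕ, r ≤ p → 0 ≤ ∫ ω, X ω ^ r ∂μ)
    (hkth : ε ^ k ≤ ∫ ω, X ω ^ k ∂μ) :
    (1 + ε / 2) ^ p ≤ ∫ ω, (X ω + 1) ^ p ∂μ := by
  have h4k : 4 * k ≤ p := by
    have := le_ceil_natCast_div (k := k) hε.1 (by linarith [hε.2])
    omega
  have hXr : ∀ r ≤ p, Integrable (fun ω => X ω ^ r) μ := fun r hr =>
    integrable_pow_of_integrable_abs_pow hX.aestronglyMeasurable hint hr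
  have h4th : ε ^ (4 * k) ≤ ∫ ω, X ω ^ (4 * k) ∂μ :=
    calc ε ^ (4 * k) = (ε ^ k) ^ 4 := by ring
      _ ≤ (∫ ω, X ω ^ k ∂μ) ^ 4 := pow_le_pow_left₀ (pow_nonneg hε.1.le k) hkth 4
      _ ≤ ∫ ω, (X ω ^ k) ^ 4 ∂μ := pow_integral_le_integral_pow (by decide) (hXr k (by omega))
          (by simpa only [← pow_mul, mul_comm k] using hXr (4 * k) h4k)
      _ = ∫ ω, X ω ^ (4 * k) ∂μ := by simp_rw [← pow_mul, mul_comm k]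
  calc (1 + ε / 2) ^ p ≤ p.choose (4 * k) * ε ^ (4 * k) :=
        one_add_half_pow_le_choose_mul_pow hε hk.ne' hp
    _ ≤ p.choose (4 * k) * ∫ ω, X ω ^ (4 * k) ∂μ := by gcongr
    _ ≤ ∫ ω, (X ω + 1) ^ p ∂μ := choose_mul_integral_pow_le_integral_add_one_pow hXr hmom h4k
end

section
/- Density increment from sparse rows: Let W ⊆ 𝔽₂ⁿ be a linear subspace, let X, Y, D ⊆ W be nonempty subsets with densities δ_X = |X|/|W|, δ_Y = |Y|/|W|, δ_D = |D|/|W|, and let A ⊆ S(X, Y, D) with |A| = α·δ_X·δ_Y·δ_D·|W|². Let ε̃ ∈ (0, 1) and ε_L ∈ (0, 1/2), and define L := {y ∈ Y : |{x ∈ W : (x, y) ∈ A}| < (1−ε̃)·α·δ_X·δ_D·|W|}. If |L| ≥ ε_L·|Y|, then there exists a subset Y' ⊆ Y with |Y'| ≥ |Y|/2 such that |A ∩ S(X, Y', D)| ≥ (1 + ε̃·ε_L/2)·α·δ_X·(|Y'|/|W|)·δ_D·|W|². -/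
/-- The container set `S(X, Y, D)` (Section 5.1 of the paper). -/
def Container (n : ℕ) (X Y D : Set (Fin n → ZMod 2)) :
    Set ((Fin n → ZMod 2) × (Fin n → ZMod 2)) :=
  {p | p.1 ∈ X ∧ p.2 ∈ Y ∧ p.1 + p.2 ∈ D}

/-!
Let `c = α δX δD |W|`, the average number of points of `A` in a row `{x | (x, y) ∈ A}`.
Deleting a set `T` of sparse rows from `Y` loses at most `(1 - εt) c |T|` points, so the rows
left over hold `εt c |T|` more points than `c |Y \ T|`. Taking for `T` all sparse rows, or
`⌊|Y| / 2⌋` of them if there are more, keeps `|Y \ T| ≥ |Y| / 2` and makes this surplus at least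
`(εt εL / 2) c |Y \ T|`. Since the rows average `c`, not all of them are sparse, which rules out
the case `|Y| = 1` where `⌊|Y| / 2⌋ = 0`.
-/

open Finset

-- For `l > m / 2` take `k = ⌊m / 2⌋ ≥ (m - 1) / 2`; then `m ≥ 2`, and that suffices as `ε ≤ 2 / 3`.
theorem exists_le_half_of_lt {l m : ℕ} {ε : ℝ} (hε₀ : 0 ≤ ε) (hε₁ : ε ≤ 2 / 3) (hlm : l < m)
    (hl : ε * m ≤ l) : ∃ k ≤ l, (k : ℝ) ≤ m / 2 ∧ ε * m ≤ (2 + ε) * k := by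
  rcases le_or_gt l (m / 2) with hsmall | hlarge
  · exact ⟨l, le_rfl, (Nat.cast_le.2 hsmall).trans Nat.cast_div_le, by nlinarith⟩
  · refine ⟨m / 2, hlarge.le, Nat.cast_div_le, ?_⟩
    have hm : (2 : ℝ) ≤ m := by exact_mod_cast (by omega : 2 ≤ m)
    have hk : (m : ℝ) - 1 ≤ 2 * (m / 2 : ℕ) := by
      have := (Nat.cast_le (α := ℝ)).2 (by omega : m ≤ 2 * (m / 2) + 1)
      push_cast at this; linarith
    nlinarith

section Rows

variable {α β : Type*} [DecidableEq β] {A : Finset (α × β)}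

theorem natCard_setOf_prodMk_mem (y : β) :
    Nat.card {x | (x, y) ∈ (A : Set (α × β))} = #{p ∈ A | p.2 = y} := by
  have himage : (fun x ↦ (x, y)) '' {x | (x, y) ∈ (A : Set (α × β))} = ↑{p ∈ A | p.2 = y} := by
    ext ⟨x, y'⟩
    simp only [Set.mem_image, Set.mem_ofPred_eq, mem_coe, mem_filter, Prod.mk.injEq]
    grind
  rw [← Nat.card_image_of_injective (Prod.mk_left_injective y), himage, Nat.card_coe_set_eq,
    Set.ncard_coe_finset]

theorem card_filter_sparse_lt_card {Y : Finset β} {c ε : ℝ} (hY : Y.Nonempty)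
    (hAY : ∀ p ∈ A, p.2 ∈ Y) (hA : (#A : ℝ) = c * #Y) (hε : 0 ≤ ε) :
    #{y ∈ Y | (#{p ∈ A | p.2 = y} : ℝ) < (1 - ε) * c} < #Y := by
  refine card_lt_card (filter_ssubset.2 ?_)
  by_contra! hsparse
  have hsum : (#A : ℝ) < ∑ _y ∈ Y, (1 - ε) * c := by
    rw [card_eq_sum_card_fiberwise hAY, Nat.cast_sum]
    exact sum_lt_sum_of_nonempty hY hsparse
  rw [sum_const, nsmul_eq_mul] at hsum
  nlinarith [(#A).cast_nonneg (α := ℝ)]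

theorem le_card_filter_snd_notMem {T : Finset β} {m : ℕ} {c εt εL : ℝ} (hc : 0 ≤ c)
    (hεt : 0 ≤ εt) (hA : (#A : ℝ) = c * m)
    (hT : ∀ y ∈ T, (#{p ∈ A | p.2 = y} : ℝ) ≤ (1 - εt) * c)
    (hTm : εL * m ≤ (2 + εL) * #T) :
    (1 + εt * εL / 2) * c * (m - #T) ≤ #{p ∈ A | p.2 ∉ T} := by
  have hsum : ∑ y ∈ T, (#{p ∈ A | p.2 = y} : ℝ) ≤ #T * ((1 - εt) * c) := by
    simpa using sum_le_sum hT
  have hsplit : (#{p ∈ A | p.2 ∉ T} : ℝ) + ∑ y ∈ T, (#{p ∈ A | p.2 = y} : ℝ) = #A := by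
    rw [← Nat.cast_sum, ← Nat.cast_add, sum_card_fiberwise_eq_card_filter, add_comm,
      card_filter_add_card_filter_not]
  have hgain : 0 ≤ εt * c * ((2 + εL) * #T - εL * m) :=
    mul_nonneg (mul_nonneg hεt hc) (by linarith)
  linarith

theorem exists_sdiff_density_increment {Y : Finset β} {c εt εL : ℝ} (hY : Y.Nonempty)
    (hAY : ∀ p ∈ A, p.2 ∈ Y) (hA : (#A : ℝ) = c * #Y) (hεt : 0 ≤ εt) (hεL₀ : 0 ≤ εL)
    (hεL₁ : εL ≤ 2 / 3) (hL : εL * #Y ≤ #{y ∈ Y | (#{p ∈ A | p.2 = y} : ℝ) < (1 - εt) * c}) :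
    ∃ T ⊆ Y, (#T : ℝ) ≤ #Y / 2 ∧
      (1 + εt * εL / 2) * c * (#Y - #T) ≤ #{p ∈ A | p.2 ∉ T} := by
  have hc : 0 ≤ c := nonneg_of_mul_nonneg_left (hA ▸ (#A).cast_nonneg) (by simpa)
  obtain ⟨k, hkL, hkY, hk⟩ :=
    exists_le_half_of_lt hεL₀ hεL₁ (card_filter_sparse_lt_card hY hAY hA hεt) hL
  obtain ⟨T, hTL, rfl⟩ := exists_subset_card_eq hkL
  exact ⟨T, hTL.trans (filter_subset _ _), hkY,
    le_card_filter_snd_notMem hc hεt hA (fun y hy ↦ (mem_filter.1 (hTL hy)).2.le) hk⟩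

end Rows

section Container

variable {n : ℕ} {X Y D : Set (Fin n → ZMod 2)}

theorem inter_container_sdiff {A : Set ((Fin n → ZMod 2) × (Fin n → ZMod 2))}
    (hA : A ⊆ Container n X Y D) (T : Set (Fin n → ZMod 2)) :
    A ∩ Container n X (Y \ T) D = {p ∈ A | p.2 ∉ T} := by
  ext p
  have hAp := @hA p
  simp only [Container, Set.mem_inter_iff, Set.mem_ofPred_eq, Set.mem_sdiff] at hAp ⊢
  grind

theorem natCard_row_eq {W : Submodule (ZMod 2) (Fin n → ZMod 2)}
    {A : Finset ((Fin n → ZMod 2) × (Fin n → ZMod 2))} (hXW : X ⊆ W)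
    (hA : ↑A ⊆ Container n X Y D) (y : Fin n → ZMod 2) :
    Nat.card {x | x ∈ W ∧ (x, y) ∈ (A : Set (_ × _))} = #{p ∈ A | p.2 = y} := by
  have hinW : {x | x ∈ W ∧ (x, y) ∈ (A : Set (_ × _))} = {x | (x, y) ∈ (A : Set (_ × _))} :=
    Set.ext fun x ↦ and_iff_right_of_imp fun hx ↦ hXW (hA hx).1
  rw [hinW, natCard_setOf_prodMk_mem]

end Container

theorem sparse_rows_density_increment_general
    (n : ℕ) (W : Submodule (ZMod 2) (Fin n → ZMod 2))
    (X Y D : Set (Fin n → ZMod 2))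
    (A : Set ((Fin n → ZMod 2) × (Fin n → ZMod 2)))
    (δX δY δD α εt εL : ℝ)
    (hYne : Y.Nonempty)
    (hXW : X ⊆ (W : Set (Fin n → ZMod 2)))
    (hA : A ⊆ Container n X Y D)
    (hδY : δY = (Nat.card ↥Y : ℝ) / (Nat.card ↥W : ℝ))
    (hα : (Nat.card ↥A : ℝ) = α * δX * δY * δD * (Nat.card ↥W : ℝ) ^ 2)
    (hεt : εt ∈ Set.Ioo (0 : ℝ) 1) (hεL : εL ∈ Set.Ioo (0 : ℝ) (1 / 2))
    (hL : εL * (Nat.card ↥Y : ℝ) ≤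
      (Nat.card ↥{y : Fin n → ZMod 2 | y ∈ Y ∧
        (Nat.card ↥{x : Fin n → ZMod 2 | x ∈ W ∧ (x, y) ∈ A} : ℝ) <
          (1 - εt) * α * δX * δD * (Nat.card ↥W : ℝ)} : ℝ)) :
    ∃ Y' : Set (Fin n → ZMod 2), Y' ⊆ Y ∧
      (Nat.card ↥Y : ℝ) / 2 ≤ (Nat.card ↥Y' : ℝ) ∧
      (1 + εt * εL / 2) * α * δX * ((Nat.card ↥Y' : ℝ) / (Nat.card ↥W : ℝ)) * δD *
          (Nat.card ↥W : ℝ) ^ 2 ≤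
        (Nat.card ↥(A ∩ Container n X Y' D) : ℝ) := by
  classical
  obtain ⟨A, rfl⟩ := A.toFinite.exists_finset_coe
  obtain ⟨Y, rfl⟩ := Y.toFinite.exists_finset_coe
  have hw : (0 : ℝ) < Nat.card W := Nat.cast_pos.2 Nat.card_pos
  simp only [Nat.card_coe_set_eq, Set.ncard_coe_finset, natCard_row_eq hXW hA] at hα hδY hL ⊢
  have hAc : (#A : ℝ) = α * δX * δD * Nat.card W * #Y := by
    rw [hα, hδY]; field_simp
  obtain ⟨T, hTY, hhalf, hincr⟩ := exists_sdiff_density_increment (by simpa using hYne)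
    (fun p hp ↦ (hA hp).2.1) hAc hεt.1.le hεL.1.le (by linarith [hεL.2]) (by
      convert hL using 2
      rw [← Set.ncard_coe_finset, coe_filter]
      simp only [mul_assoc, mem_coe])
  have hcard : (((Y : Set (Fin n → ZMod 2)) \ T).ncard : ℝ) = #Y - #T := by
    rw [← coe_sdiff, Set.ncard_coe_finset, card_sdiff_of_subset hTY,
      Nat.cast_sub (card_le_card hTY)]
  refine ⟨(Y : Set (Fin n → ZMod 2)) \ T, Set.sdiff_subset, by linarith, ?_⟩
  rw [inter_container_sdiff hA, hcard]
  simp only [mem_coe, ← coe_filter, Set.ncard_coe_finset]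
  convert hincr using 1
  field_simp

/-- Density increment from sparse rows (Lemma 5.10 of the paper): if many rows of
`A` are sparse, then removing them yields a density increment. -/
theorem sparse_rows_density_increment
    (n : ℕ) (W : Submodule (ZMod 2) (Fin n → ZMod 2))
    (X Y D : Set (Fin n → ZMod 2))
    (A : Set ((Fin n → ZMod 2) × (Fin n → ZMod 2)))
    (δX δY δD α εt εL : ℝ)
    (hXne : X.Nonempty) (hYne : Y.Nonempty) (hDne : D.Nonempty)
    (hXW : X ⊆ (W : Set (Fin n → ZMod 2))) (hYW : Y ⊆ (W : Set (Fin n → ZMod 2)))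
    (hDW : D ⊆ (W : Set (Fin n → ZMod 2)))
    (hA : A ⊆ Container n X Y D)
    (hδX : δX = (Nat.card ↥X : ℝ) / (Nat.card ↥W : ℝ))
    (hδY : δY = (Nat.card ↥Y : ℝ) / (Nat.card ↥W : ℝ))
    (hδD : δD = (Nat.card ↥D : ℝ) / (Nat.card ↥W : ℝ))
    (hα : (Nat.card ↥A : ℝ) = α * δX * δY * δD * (Nat.card ↥W : ℝ) ^ 2)
    (hεt : εt ∈ Set.Ioo (0 : ℝ) 1) (hεL : εL ∈ Set.Ioo (0 : ℝ) (1 / 2))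
    (hL : εL * (Nat.card ↥Y : ℝ) ≤
      (Nat.card ↥{y : Fin n → ZMod 2 | y ∈ Y ∧
        (Nat.card ↥{x : Fin n → ZMod 2 | x ∈ W ∧ (x, y) ∈ A} : ℝ) <
          (1 - εt) * α * δX * δD * (Nat.card ↥W : ℝ)} : ℝ)) :
    ∃ Y' : Set (Fin n → ZMod 2), Y' ⊆ Y ∧
      (Nat.card ↥Y : ℝ) / 2 ≤ (Nat.card ↥Y' : ℝ) ∧
      (1 + εt * εL / 2) * α * δX * ((Nat.card ↥Y' : ℝ) / (Nat.card ↥W : ℝ)) * δD *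
          (Nat.card ↥W : ℝ) ^ 2 ≤
        (Nat.card ↥(A ∩ Container n X Y' D) : ℝ) :=
  sparse_rows_density_increment_general n W X Y D A δX δY δD α εt εL hYne hXW hA hδY hα hεt hεL hL
end
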